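/- arXiv:1206.1950 — 8 statements merged into one kernel-verified Lean document; each statement's English description precedes it below -/
import Mathlib

section
/- For every real λ < 2, every integer n ≥ 3 and every x ∈ [−1,1], one has U*_n(1,λ) > 0 and |U*_n(x,λ)/U*_n(1,λ)| ≤ ((1+|1−λ|)/(2−λ)) · 2/(1/2 + √(1−x²)·(n−1)). -/
open Polynomial

noncomputable section

/-- The monic Chebyshev polynomial of the first kind: `T̃_0 = 1`,
`T̃_n = 2^(1-n) T_n` for `n ≥ 1`. -/
def monicT (n : ℕ) : Polynomial ℝ :=
  if n = 0 then 1 else C ((2 : ℝ) ^ (n - 1 : ℕ))⁻¹ * Polynomial.Chebyshev.T ℝ n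

/-- The monic Chebyshev polynomial of the second kind: `Ũ_n = 2^(-n) U_n`. -/
def monicU (n : ℕ) : Polynomial ℝ :=
  C ((2 : ℝ) ^ n)⁻¹ * Polynomial.Chebyshev.U ℝ n

/-- The co-dilated Chebyshev polynomial `U*_n(·, λ) = (2−λ) Ũ_n + (λ−1) T̃_n`. -/
def Ustar (n : ℕ) (lam : ℝ) : Polynomial ℝ :=
  C (2 - lam) * monicU n + C (lam - 1) * monicT n

lemma auxTone (m : ℤ) : (Polynomial.Chebyshev.T ℝ m).eval 1 = 1 := by
  have h := Polynomial.Chebyshev.T_real_cos 0 m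
  simpa using h

lemma auxUone : ∀ k : ℕ, (Polynomial.Chebyshev.U ℝ k).eval 1 = k + 1 := by
  intro k
  induction k with
  | zero => simp [Polynomial.Chebyshev.U_zero]
  | succ k ih =>
    have h := congrArg (Polynomial.eval (1:ℝ)) (Polynomial.Chebyshev.U_eq_X_mul_U_add_T ℝ (k : ℤ))
    simp only [Polynomial.eval_add, Polynomial.eval_mul, Polynomial.eval_X, one_mul] at h
    have hc : ((k : ℤ) + 1) = ((k + 1 : ℕ) : ℤ) := by push_cast; ring
    rw [hc] at h
    rw [h, ih, auxTone]
    push_cast; ring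

lemma auxAbsT (m : ℤ) (x : ℝ) (hx : x ∈ Set.Icc (-1:ℝ) 1) :
    |(Polynomial.Chebyshev.T ℝ m).eval x| ≤ 1 := by
  have hxc := Real.cos_arccos hx.1 hx.2
  rw [← hxc, Polynomial.Chebyshev.T_real_cos]
  exact Real.abs_cos_le_one _

lemma auxAbsU (x : ℝ) (hx : x ∈ Set.Icc (-1:ℝ) 1) :
    ∀ k : ℕ, |(Polynomial.Chebyshev.U ℝ k).eval x| ≤ k + 1 := by
  have hx1 : |x| ≤ 1 := abs_le.mpr ⟨hx.1, hx.2⟩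
  intro k
  induction k with
  | zero => simp [Polynomial.Chebyshev.U_zero]
  | succ k ih =>
    have h := congrArg (Polynomial.eval x) (Polynomial.Chebyshev.U_eq_X_mul_U_add_T ℝ (k : ℤ))
    simp only [Polynomial.eval_add, Polynomial.eval_mul, Polynomial.eval_X] at h
    have hc : ((k : ℤ) + 1) = ((k + 1 : ℕ) : ℤ) := by push_cast; ring
    rw [hc] at h
    rw [h]
    calc |x * (Polynomial.Chebyshev.U ℝ (k:ℤ)).eval x + (Polynomial.Chebyshev.T ℝ ((k+1:ℕ):ℤ)).eval x|
        ≤ |x| * |(Polynomial.Chebyshev.U ℝ (k:ℤ)).eval x| + |(Polynomial.Chebyshev.T ℝ ((k+1:ℕ):ℤ)).eval x| := by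
          rw [← abs_mul]; exact abs_add_le _ _
      _ ≤ 1 * ((k:ℝ) + 1) + 1 := by
          exact add_le_add (mul_le_mul hx1 ih (abs_nonneg _) zero_le_one) (auxAbsT _ x hx)
      _ = ((k+1:ℕ):ℝ) + 1 := by push_cast; ring


lemma arith_sq_le (a b : ℝ) (ha : 0 ≤ a) (hb : 0 ≤ b) (h : a^2 ≤ b^2) : a ≤ b := by nlinarith

lemma arith_e2a (c x s : ℝ) (hc1 : 1 ≤ c) (hxs : x^2 + s^2 = 1) :
    c^2*x^2 + (2-c)^2*s^2 ≤ c^2 := by nlinarith [sq_nonneg s]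

lemma arith_e2b (c x s : ℝ) (hc : 0 < c) (hc1 : c ≤ 1) (hxs : x^2 + s^2 = 1) :
    c^2*x^2 + (2-c)^2*s^2 ≤ (2-c)^2 := by nlinarith [sq_nonneg x]

lemma arith_e3 (c N : ℝ) (hc : 0 < c) (hN : 2 ≤ N) : c^2*N^2 ≤ (c*N+2)^2 := by
  nlinarith [mul_pos hc (show (0:ℝ) < N by linarith)]

lemma arith_5a (c N : ℝ) (hc2 : 2 ≤ c) (hN : 2 ≤ N) :
    c*(c*(N+1)+(c-2)) ≤ 2*c*(c*N+2) := by
  nlinarith [mul_nonneg (mul_nonneg (by linarith : (0:ℝ) ≤ c) (by linarith : (0:ℝ) ≤ c))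
    (by linarith : (0:ℝ) ≤ N - 2)]

lemma arith_5b (c N : ℝ) (hc : 0 < c) (hc2 : c ≤ 2) (hN : 2 ≤ N) :
    c*(c*(N+1)+(2-c)) ≤ 2*c*(c*N+2) := by
  nlinarith [mul_nonneg (mul_nonneg hc.le hc.le) (by linarith : (0:ℝ) ≤ N)]

lemma arith_5c (c N : ℝ) (hc : 0 < c) (hc1 : c ≤ 1) (hN : 2 ≤ N) :
    c*(c*(N+1)+(2-c)) ≤ 2*(2-c)*(c*N+2) := by
  nlinarith [mul_nonneg (mul_nonneg hc.le (by linarith : (0:ℝ) ≤ 4 - 3*c))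
    (by linarith : (0:ℝ) ≤ N - 2)]

set_option maxHeartbeats 400000 in
theorem codilated_chebyshev_bound (lam : ℝ) (hlam : lam < 2) (n : ℕ) (hn : 3 ≤ n)
    (x : ℝ) (hx : x ∈ Set.Icc (-1 : ℝ) 1) :
    0 < (Ustar n lam).eval 1 ∧
    |(Ustar n lam).eval x / (Ustar n lam).eval 1| ≤
      (1 + |1 - lam|) / (2 - lam) * (2 / (1 / 2 + Real.sqrt (1 - x ^ 2) * (n - 1))) := by
  obtain ⟨hx1, hx2⟩ := hx
  have hxmem : x ∈ Set.Icc (-1:ℝ) 1 := ⟨hx1, hx2⟩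
  set c : ℝ := 2 - lam with hc_def
  clear_value c
  have hc : 0 < c := by rw [hc_def]; linarith
  have hn0 : n ≠ 0 := by omega
  have hNn : (3:ℝ) ≤ (n:ℝ) := by exact_mod_cast hn
  set N : ℝ := (n : ℝ) - 1 with hN_def
  clear_value N
  have hN : 2 ≤ N := by rw [hN_def]; linarith
  set p : ℝ := ((2:ℝ)^n)⁻¹ with hp_def
  clear_value p
  have hp : 0 < p := by rw [hp_def]; positivity
  have hpow : (2:ℝ)^(n-1) * 2 = 2^n := by
    rw [← pow_succ]; congr 1; omega
  have h2n1 : (0:ℝ) < 2^(n-1) := by positivity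
  have hpinv : ((2:ℝ)^(n-1))⁻¹ = 2 * ((2:ℝ)^n)⁻¹ := by
    rw [← hpow]
    field_simp
  set t : ℝ := Real.arccos x with ht_def
  clear_value t
  have hxc : Real.cos t = x := by rw [ht_def]; exact Real.cos_arccos hx1 hx2
  set s : ℝ := Real.sqrt (1 - x^2) with hs_def
  clear_value s
  have hs : Real.sin t = s := by rw [ht_def, hs_def]; exact Real.sin_arccos x
  set Tn : ℝ := (Polynomial.Chebyshev.T ℝ (n:ℤ)).eval x with hTn_def
  clear_value Tn
  set Un1 : ℝ := (Polynomial.Chebyshev.U ℝ ((n:ℤ)-1)).eval x with hUn1_def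
  clear_value Un1
  -- trig formulas
  have hTcos : Tn = Real.cos ((n:ℝ) * t) := by
    rw [hTn_def, ← hxc, Polynomial.Chebyshev.T_real_cos]
    push_cast; ring_nf
  have hUsin : Un1 * s = Real.sin ((n:ℝ) * t) := by
    have h := Polynomial.Chebyshev.U_real_cos t ((n:ℤ) - 1)
    rw [hxc, hs] at h
    rw [hUn1_def, h]
    push_cast; ring_nf
  -- recurrence
  have hUrec : (Polynomial.Chebyshev.U ℝ (n:ℤ)).eval x = x * Un1 + Tn := by
    have h := congrArg (Polynomial.eval x) (Polynomial.Chebyshev.T_eq_U_sub_X_mul_U ℝ (n:ℤ))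
    simp only [Polynomial.eval_sub, Polynomial.eval_mul, Polynomial.eval_X] at h
    rw [← hTn_def, ← hUn1_def] at h
    linarith
  -- evaluations of Ustar
  have hevx : (Ustar n lam).eval x = p * (c * x * Un1 + (2 - c) * Tn) := by
    simp only [Ustar, monicU, monicT, if_neg hn0, Polynomial.eval_add, Polynomial.eval_mul,
      Polynomial.eval_C]
    rw [hUrec, ← hTn_def, hpinv, hp_def, hc_def]
    ring
  have hev1 : (Ustar n lam).eval 1 = p * (c * N + 2) := by
    simp only [Ustar, monicU, monicT, if_neg hn0, Polynomial.eval_add, Polynomial.eval_mul,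
      Polynomial.eval_C]
    rw [auxUone n, auxTone, hpinv, hp_def, hc_def, hN_def]
    ring
  have hcN2 : 0 < c * N + 2 := by have := mul_pos hc (show (0:ℝ) < N by linarith); linarith
  have hev1pos : 0 < (Ustar n lam).eval 1 := by
    rw [hev1]; exact mul_pos hp hcN2
  refine ⟨hev1pos, ?_⟩
  set F : ℝ := c * x * Un1 + (2 - c) * Tn with hF_def
  clear_value F
  -- basic facts about s
  have h1x2 : 0 ≤ 1 - x^2 := by nlinarith
  have hs2 : s^2 = 1 - x^2 := by rw [hs_def]; exact Real.sq_sqrt h1x2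
  have hs0 : 0 ≤ s := by rw [hs_def]; exact Real.sqrt_nonneg _
  have hs1 : s ≤ 1 := by nlinarith [sq_nonneg x]
  have hSC : Real.sin ((n:ℝ)*t)^2 + Real.cos ((n:ℝ)*t)^2 = 1 := Real.sin_sq_add_cos_sq _
  -- quadratic bound
  have hsF2 : (s*F)^2 ≤ c^2*x^2 + (2-c)^2*s^2 := by
    have key : s*F = c*x*(Un1*s) + (2-c)*s*Tn := by rw [hF_def]; ring
    rw [key, hUsin, hTcos]
    nlinarith [sq_nonneg (c*x*Real.cos ((n:ℝ)*t) - (2-c)*s*Real.sin ((n:ℝ)*t)), hSC]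
  set M : ℝ := 1 + |1 - lam| with hM_def
  clear_value M
  have hM1 : (1:ℝ) ≤ M := by rw [hM_def]; have := abs_nonneg (1 - lam); linarith
  have hM0 : 0 < M := by linarith
  have he2 : c^2*x^2 + (2-c)^2*s^2 ≤ M^2 := by
    rcases le_total lam 1 with h | h
    · have habs : |1 - lam| = 1 - lam := abs_of_nonneg (by linarith)
      have hMc : M = c := by rw [hM_def, habs, hc_def]; ring
      rw [hMc]
      have hc1 : 1 ≤ c := by rw [hc_def]; linarith
      exact arith_e2a c x s hc1 (by linarith [hs2])
    · have habs : |1 - lam| = lam - 1 := by rw [abs_of_nonpos (by linarith)]; ring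
      have hMc : M = 2 - c := by rw [hM_def, habs, hc_def]; ring
      rw [hMc]
      have hc1 : c ≤ 1 := by rw [hc_def]; linarith
      exact arith_e2b c x s hc hc1 (by linarith [hs2])
  have he3 : c^2*N^2 ≤ (c*N+2)^2 := arith_e3 c N hc hN
  have hA2 : (c*s*N*|F|)^2 ≤ (M*(c*N+2))^2 := by
    calc (c*s*N*|F|)^2 = (c^2*N^2) * (s*F)^2 := by
          rw [mul_pow, mul_pow, mul_pow, mul_pow, sq_abs]; ring
      _ ≤ (c^2*N^2) * (c^2*x^2+(2-c)^2*s^2) := by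
          apply mul_le_mul_of_nonneg_left hsF2 (by positivity)
      _ ≤ (c*N+2)^2 * M^2 :=
          mul_le_mul he3 he2 (by positivity) (by positivity)
      _ = (M*(c*N+2))^2 := by ring
  have hA : c*s*N*|F| ≤ M*(c*N+2) := by
    have h1 : 0 ≤ c*s*N*|F| := by
      apply mul_nonneg; apply mul_nonneg; apply mul_nonneg
      exact hc.le; exact hs0; linarith; exact abs_nonneg _
    have h2 : 0 ≤ M*(c*N+2) := by positivity
    exact arith_sq_le _ _ h1 h2 hA2
  -- linear bound
  have hUn1b : |Un1| ≤ N + 1 := by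
    have h := auxAbsU x hxmem (n-1)
    have hcast : (((n-1:ℕ)):ℤ) = (n:ℤ) - 1 := by omega
    rw [hcast] at h
    rw [hUn1_def]
    have : ((n-1:ℕ):ℝ) = N := by rw [hN_def]; push_cast [Nat.cast_sub (by omega : 1 ≤ n)]; ring
    linarith [h, this.symm ▸ h]
  have hTnb : |Tn| ≤ 1 := by rw [hTn_def]; exact auxAbsT (n:ℤ) x hxmem
  have hxabs : |x| ≤ 1 := abs_le.mpr ⟨hx1, hx2⟩
  have h2c : (2:ℝ) - c = lam := by rw [hc_def]; ring
  have hF : |F| ≤ c*(N+1) + |lam| := by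
    calc |F| ≤ |c*x*Un1| + |(2 - c)*Tn| := by rw [hF_def]; exact abs_add_le _ _
      _ = c*(|x| * |Un1|) + |2 - c| * |Tn| := by
          rw [abs_mul, abs_mul, abs_mul, abs_of_pos hc]; ring
      _ ≤ c*(1*(N+1)) + |2 - c| * 1 := by
          apply add_le_add
          · apply mul_le_mul_of_nonneg_left _ hc.le
            exact mul_le_mul hxabs hUn1b (abs_nonneg _) zero_le_one
          · exact mul_le_mul_of_nonneg_left hTnb (abs_nonneg _)
      _ = c*(N+1) + |lam| := by rw [h2c]; ring
  have harith : c*(c*(N+1)+|lam|) ≤ 2*M*(c*N+2) := by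
    rcases le_total lam 0 with h0 | h0
    · rw [abs_of_nonpos h0]
      have hMc : M = c := by
        rw [hM_def, abs_of_nonneg (by linarith : (0:ℝ) ≤ 1 - lam), hc_def]; ring
      rw [hMc]
      have hlc : -lam = c - 2 := by rw [hc_def]; ring
      rw [hlc]
      exact arith_5a c N (by rw [hc_def]; linarith) hN
    · rcases le_total lam 1 with h1 | h1
      · have hMc : M = c := by
          rw [hM_def, abs_of_nonneg (by linarith : (0:ℝ) ≤ 1 - lam), hc_def]; ring
        rw [abs_of_nonneg h0, hMc, ← h2c]
        exact arith_5b c N hc (by rw [hc_def]; linarith) hN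
      · have hMc : M = 2 - c := by
          rw [hM_def, abs_of_nonpos (by linarith : 1 - lam ≤ 0), hc_def]; ring
        have hc1 : c ≤ 1 := by rw [hc_def]; linarith
        rw [abs_of_nonneg (by linarith), hMc, ← h2c]
        exact arith_5c c N hc (by rw [hc_def]; linarith) hN
  have hB : c*|F| ≤ 2*M*(c*N+2) :=
    le_trans (mul_le_mul_of_nonneg_left hF hc.le) harith
  have hD : 0 < 1/2 + s*N := by
    have : 0 ≤ s*N := mul_nonneg hs0 (by linarith)
    linarith
  have hfinal : |F| * (c * (1/2 + s*N)) ≤ 2*M*(c*N+2) := by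
    have expand : |F| * (c * (1/2 + s*N)) = (c*|F|)*(1/2) + c*s*N*|F| := by ring
    rw [expand]; linarith [hA, hB]
  -- assemble
  have hratio : |(Ustar n lam).eval x / (Ustar n lam).eval 1| = |F| / (c*N+2) := by
    rw [hevx, hev1, mul_div_mul_left _ _ (ne_of_gt hp), abs_div,
      abs_of_pos hcN2]
  rw [hratio]
  have heq : M/c * (2/(1/2+s*N)) = (2*M)/(c*(1/2+s*N)) := by
    field_simp
  calc |F| / (c*N+2) ≤ (2*M)/(c*(1/2+s*N)) := by
        rw [div_le_div_iff₀ hcN2 (mul_pos hc hD)]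
        linarith [hfinal]
    _ = M/c * (2/(1/2+s*N)) := heq.symm

end
end

section
/- For every real λ < 2 and every integer n ≥ 3, the residual polynomial r*_n(y) := U*_n(1−2y, λ)/U*_n(1, λ) satisfies |r*_n(y)| ≤ ((1+|1−λ|)/(2−λ)) · 1/(1/4 + √(y(1−y))·(n−1)) for all y ∈ [0,1]; consequently sup_{y ∈ [0,1]} √(y(1−y)) |r*_n(y)| ≤ (1+|1−λ|)/((2−λ)(n−1)). -/
open Polynomial
set_option maxHeartbeats 1000000

noncomputable section

/-- The residual polynomial `r*_n(y) = U*_n(1−2y, λ)/U*_n(1, λ)`. -/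
def residualCheb (n : ℕ) (lam : ℝ) (y : ℝ) : ℝ :=
  (Ustar n lam).eval (1 - 2 * y) / (Ustar n lam).eval 1

private lemma chebT_eval_one : ∀ n : ℕ, (Polynomial.Chebyshev.T ℝ n).eval 1 = 1
  | 0 => by simp [Polynomial.Chebyshev.T_zero]
  | 1 => by simp [Polynomial.Chebyshev.T_one]
  | (n+2) => by
      have h1 := chebT_eval_one (n+1)
      have h2 := chebT_eval_one n
      rw [show ((n+2:ℕ):ℤ) = (n:ℤ)+2 by push_cast; ring, Polynomial.Chebyshev.T_add_two]
      rw [show ((n+1:ℕ):ℤ) = (n:ℤ)+1 by push_cast; ring] at h1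
      simp [h1, h2]
      norm_num

private lemma chebU_eval_one : ∀ n : ℕ, (Polynomial.Chebyshev.U ℝ n).eval 1 = (n:ℝ) + 1
  | 0 => by simp [Polynomial.Chebyshev.U_zero]
  | 1 => by simp [Polynomial.Chebyshev.U_one]; norm_num
  | (n+2) => by
      have h1 := chebU_eval_one (n+1)
      have h2 := chebU_eval_one n
      rw [show ((n+2:ℕ):ℤ) = (n:ℤ)+2 by push_cast; ring, Polynomial.Chebyshev.U_add_two]
      rw [show ((n+1:ℕ):ℤ) = (n:ℤ)+1 by push_cast; ring] at h1
      simp [h1, h2]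
      push_cast
      ring

private lemma chebT_eval_negone : ∀ n : ℕ, (Polynomial.Chebyshev.T ℝ n).eval (-1) = (-1:ℝ)^n
  | 0 => by simp [Polynomial.Chebyshev.T_zero]
  | 1 => by simp [Polynomial.Chebyshev.T_one]
  | (n+2) => by
      have h1 := chebT_eval_negone (n+1)
      have h2 := chebT_eval_negone n
      rw [show ((n+2:ℕ):ℤ) = (n:ℤ)+2 by push_cast; ring, Polynomial.Chebyshev.T_add_two]
      rw [show ((n+1:ℕ):ℤ) = (n:ℤ)+1 by push_cast; ring] at h1
      simp [h1, h2]
      ring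

private lemma chebU_eval_negone :
    ∀ n : ℕ, (Polynomial.Chebyshev.U ℝ n).eval (-1) = (-1:ℝ)^n * ((n:ℝ) + 1)
  | 0 => by simp [Polynomial.Chebyshev.U_zero]
  | 1 => by simp [Polynomial.Chebyshev.U_one]; norm_num
  | (n+2) => by
      have h1 := chebU_eval_negone (n+1)
      have h2 := chebU_eval_negone n
      rw [show ((n+2:ℕ):ℤ) = (n:ℤ)+2 by push_cast; ring, Polynomial.Chebyshev.U_add_two]
      rw [show ((n+1:ℕ):ℤ) = (n:ℤ)+1 by push_cast; ring] at h1
      simp [h1, h2]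
      push_cast
      ring

private lemma abs_sin_nat_mul (k : ℕ) (t : ℝ) : |Real.sin ((k:ℝ) * t)| ≤ (k:ℝ) * |Real.sin t| := by
  induction k with
  | zero => simp
  | succ k ih =>
      have h : ((k:ℝ)+1) * t = (k:ℝ)*t + t := by ring
      push_cast
      rw [h, Real.sin_add]
      calc |Real.sin ((k:ℝ)*t) * Real.cos t + Real.cos ((k:ℝ)*t) * Real.sin t|
          ≤ |Real.sin ((k:ℝ)*t) * Real.cos t| + |Real.cos ((k:ℝ)*t) * Real.sin t| := abs_add_le _ _
        _ ≤ (k:ℝ) * |Real.sin t| + 1 * |Real.sin t| := by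
            rw [abs_mul, abs_mul]
            gcongr ?_ + ?_ * _
            · calc |Real.sin ((k:ℝ)*t)| * |Real.cos t| ≤ |Real.sin ((k:ℝ)*t)| * 1 := by
                    gcongr; exact Real.abs_cos_le_one t
                _ ≤ (k:ℝ) * |Real.sin t| := by rw [mul_one]; exact ih
            · exact Real.abs_cos_le_one _
        _ = ((k:ℝ)+1) * |Real.sin t| := by ring

private lemma Ustar_eval_one' (m : ℕ) (lam : ℝ) :
    (Ustar (m+1) lam).eval 1 = ((2 - lam) * (((m+1:ℕ):ℝ) - 1) + 2) / 2 ^ (m+1) := by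
  simp only [Ustar, monicU, monicT, if_neg (Nat.succ_ne_zero m), Nat.add_sub_cancel,
    eval_add, eval_mul, eval_C, chebU_eval_one, chebT_eval_one]
  have h2m : (2:ℝ)^m ≠ 0 := by positivity
  push_cast
  field_simp
  ring

private lemma Ustar_eval_negone' (m : ℕ) (lam : ℝ) :
    (Ustar (m+1) lam).eval (-1)
      = (-1:ℝ)^(m+1) * ((2 - lam) * (((m+1:ℕ):ℝ) - 1) + 2) / 2 ^ (m+1) := by
  simp only [Ustar, monicU, monicT, if_neg (Nat.succ_ne_zero m), Nat.add_sub_cancel,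
    eval_add, eval_mul, eval_C, chebU_eval_negone, chebT_eval_negone]
  have h2m : (2:ℝ)^m ≠ 0 := by positivity
  push_cast
  field_simp
  ring

private lemma Ustar_eval_cos (m : ℕ) (lam t : ℝ) :
    (2:ℝ)^(m+1) * ((Ustar (m+1) lam).eval (Real.cos t)) * Real.sin t
      = Real.sin (((m:ℝ)+2)*t) + (1 - lam) * Real.sin ((m:ℝ)*t) := by
  have key : (2:ℝ)^(m+1) * ((Ustar (m+1) lam).eval (Real.cos t)) * Real.sin t
      = (2-lam) * ((Polynomial.Chebyshev.U ℝ ((m+1:ℕ):ℤ)).eval (Real.cos t) * Real.sin t)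
        + (lam-1) * (2 * ((Polynomial.Chebyshev.T ℝ ((m+1:ℕ):ℤ)).eval (Real.cos t)) * Real.sin t) := by
    simp only [Ustar, monicU, monicT, if_neg (Nat.succ_ne_zero m), Nat.add_sub_cancel,
      eval_add, eval_mul, eval_C]
    have h2m : (2:ℝ)^m ≠ 0 := by positivity
    generalize (Polynomial.Chebyshev.U ℝ ((m+1:ℕ):ℤ)).eval (Real.cos t) = A
    generalize (Polynomial.Chebyshev.T ℝ ((m+1:ℕ):ℤ)).eval (Real.cos t) = B
    field_simp
    ring
  rw [key, Polynomial.Chebyshev.U_real_cos, Polynomial.Chebyshev.T_real_cos]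
  have e1 : ((((m+1:ℕ):ℤ):ℝ) + 1) * t = (((m:ℝ)+1)*t) + t := by push_cast; ring
  have e2 : (((m+1:ℕ):ℤ):ℝ) * t = ((m:ℝ)+1)*t := by push_cast; ring
  have e3 : ((m:ℝ)+2)*t = (((m:ℝ)+1)*t) + t := by ring
  have e4 : (m:ℝ)*t = (((m:ℝ)+1)*t) - t := by ring
  rw [e1, e2, e3, e4, Real.sin_add, Real.sin_sub]
  ring

private lemma key_ineq (a b w mR E : ℝ) (ha : 0 < a) (hb : 0 ≤ b)
    (hmR : 2 ≤ mR) (hw0 : 0 ≤ w) (hE0 : 0 ≤ E)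
    (hEsmall : E ≤ (1 + b) * (mR + 2))
    (hE1 : E * (2*w) ≤ 1 + b) :
    E * (a * (1/4 + w*mR)) ≤ (1+b) * (a*mR + 2) := by
  rcases le_or_gt (2*w*(mR+2)) 1 with hcase | hcase
  · have h1 : a * (1/4 + w*mR) * (mR+2) ≤ a*mR+2 := by
      nlinarith [mul_nonneg (mul_nonneg ha.le (by linarith : (0:ℝ) ≤ mR))
          (by linarith : (0:ℝ) ≤ 1-2*w*(mR+2)),
        mul_nonneg ha.le (by linarith : (0:ℝ) ≤ mR-2)]
    have hac : 0 ≤ a*(1/4+w*mR) := by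
      have : (0:ℝ) ≤ w*mR := mul_nonneg hw0 (by linarith)
      nlinarith
    nlinarith [mul_le_mul_of_nonneg_left h1 (by linarith : (0:ℝ) ≤ 1+b),
      mul_le_mul_of_nonneg_right hEsmall hac]
  · have hm2 : (0:ℝ) < mR+2 := by linarith
    have h1' : a*mR + 4 ≤ 2*w*(mR+2)*(a*mR+4) := by
      nlinarith [mul_nonneg (by nlinarith : (0:ℝ) ≤ a*mR+4)
        (by linarith : (0:ℝ) ≤ 2*w*(mR+2) - 1)]
    have h5' : (mR+2) * (a/2) ≤ (mR+2) * (2*(w*(a*mR+4))) := by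
      nlinarith [mul_nonneg ha.le (by linarith : (0:ℝ) ≤ mR-2)]
    have h6 : a/2 ≤ 2*(w*(a*mR+4)) := le_of_mul_le_mul_left h5' hm2
    have h2 : a*(1/4+w*mR) ≤ 2*w*(a*mR+2) := by nlinarith [h6]
    calc E * (a*(1/4+w*mR)) ≤ E * (2*w*(a*mR+2)) := mul_le_mul_of_nonneg_left h2 hE0
      _ = (E*(2*w))*(a*mR+2) := by ring
      _ ≤ (1+b)*(a*mR+2) := mul_le_mul_of_nonneg_right hE1 (by nlinarith)

theorem codilated_chebyshev_residual_bound (lam : ℝ) (hlam : lam < 2) (n : ℕ) (hn : 3 ≤ n) :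
    (∀ y ∈ Set.Icc (0 : ℝ) 1,
      |residualCheb n lam y| ≤
        (1 + |1 - lam|) / (2 - lam) * (1 / (1 / 4 + Real.sqrt (y * (1 - y)) * (n - 1)))) ∧
    (∀ y ∈ Set.Icc (0 : ℝ) 1,
      Real.sqrt (y * (1 - y)) * |residualCheb n lam y| ≤
        (1 + |1 - lam|) / ((2 - lam) * (n - 1))) := by
  obtain ⟨m, rfl⟩ : ∃ m, n = m + 1 := ⟨n - 1, by omega⟩
  set a : ℝ := 2 - lam with ha_def
  set b : ℝ := |1 - lam| with hb_def
  have ha : 0 < a := by rw [ha_def]; linarith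
  have hb : 0 ≤ b := by rw [hb_def]; exact abs_nonneg _
  have hab : a ≤ 1 + b := by rw [ha_def, hb_def]; linarith [le_abs_self (1 - lam)]
  have hm : 2 ≤ m := by omega
  have hmR : (2:ℝ) ≤ (m:ℝ) := by exact_mod_cast hm
  set N : ℝ := ((m+1:ℕ):ℝ) with hN_def
  have hNval : N = (m:ℝ) + 1 := by rw [hN_def]; push_cast; ring
  set D : ℝ := a * (N - 1) + 2 with hD_def
  have hD : 0 < D := by rw [hD_def, hNval]; nlinarith
  have h2p : (0:ℝ) < 2 ^ (m+1) := by positivity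
  clear_value a b N D
  have heval1 : (Ustar (m+1) lam).eval 1 = D / 2 ^ (m+1) := by
    rw [Ustar_eval_one', hD_def, hN_def, ha_def]
  have main : ∀ y ∈ Set.Icc (0 : ℝ) 1,
      |residualCheb (m+1) lam y| ≤
        (1 + b) / a * (1 / (1 / 4 + Real.sqrt (y * (1 - y)) * (N - 1))) := by
    rintro y ⟨hy0, hy1⟩
    set w : ℝ := Real.sqrt (y * (1 - y)) with hw_def
    have hw0 : 0 ≤ w := Real.sqrt_nonneg _
    have hyy : 0 ≤ y * (1 - y) := mul_nonneg hy0 (by linarith)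
    set c : ℝ := 1 / 4 + w * (N - 1) with hc_def
    have hc : 0 < c := by
      rw [hc_def, hNval]
      nlinarith [mul_nonneg hw0 (by linarith : (0:ℝ) ≤ (m:ℝ))]
    have hx1 : -1 ≤ 1 - 2*y := by linarith
    have hx2 : 1 - 2*y ≤ 1 := by linarith
    set t : ℝ := Real.arccos (1 - 2*y) with ht_def
    have hcos : Real.cos t = 1 - 2*y := Real.cos_arccos hx1 hx2
    have hsin : Real.sin t = 2 * w := by
      rw [ht_def, Real.sin_arccos, hw_def]
      rw [show (1 - (1-2*y)^2) = 4 * (y * (1-y)) by ring]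
      rw [show (4:ℝ) * (y * (1-y)) = 2^2 * (y*(1-y)) by norm_num]
      rw [Real.sqrt_mul (by positivity) (y*(1-y)), Real.sqrt_sq (by norm_num : (0:ℝ) ≤ 2)]
    set E : ℝ := |(Ustar (m+1) lam).eval (1 - 2*y)| * 2 ^ (m+1) with hE_def
    clear_value w c t E
    have hE0 : 0 ≤ E := by rw [hE_def]; positivity
    have hkey := Ustar_eval_cos m lam t
    rw [hcos, hsin] at hkey
    have sinb : ∀ x : ℝ, |Real.sin x| ≤ 1 := fun x =>
      abs_le.mpr ⟨Real.neg_one_le_sin x, Real.sin_le_one x⟩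
    have hES : E * (2 * w) = |Real.sin (((m:ℝ)+2)*t) + (1 - lam) * Real.sin ((m:ℝ)*t)| := by
      rw [← hkey, hE_def, abs_mul, abs_mul, abs_of_pos h2p,
        abs_of_nonneg (by linarith : (0:ℝ) ≤ 2*w)]
      ring
    have hS1 : |Real.sin (((m:ℝ)+2)*t) + (1 - lam) * Real.sin ((m:ℝ)*t)| ≤ 1 + b := by
      calc |Real.sin (((m:ℝ)+2)*t) + (1 - lam) * Real.sin ((m:ℝ)*t)|
          ≤ |Real.sin (((m:ℝ)+2)*t)| + |(1 - lam) * Real.sin ((m:ℝ)*t)| := abs_add_le _ _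
        _ ≤ 1 + b * 1 := by
            refine add_le_add (sinb _) ?_
            rw [abs_mul, ← hb_def]
            exact mul_le_mul_of_nonneg_left (sinb _) hb
        _ = 1 + b := by ring
    have habs : |Real.sin t| = 2*w := by rw [hsin]; exact abs_of_nonneg (by linarith)
    have hS2 : |Real.sin (((m:ℝ)+2)*t) + (1 - lam) * Real.sin ((m:ℝ)*t)|
        ≤ (1 + b) * (((m:ℝ)+2) * (2*w)) := by
      have b1 : |Real.sin (((m:ℝ)+2)*t)| ≤ ((m:ℝ)+2) * (2*w) := by
        have h := abs_sin_nat_mul (m+2) t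
        push_cast at h
        rw [habs] at h
        linarith
      have b2 : |Real.sin ((m:ℝ)*t)| ≤ ((m:ℝ)+2) * (2*w) := by
        have h := abs_sin_nat_mul m t
        rw [habs] at h
        nlinarith [abs_nonneg (Real.sin ((m:ℝ)*t))]
      calc |Real.sin (((m:ℝ)+2)*t) + (1 - lam) * Real.sin ((m:ℝ)*t)|
          ≤ |Real.sin (((m:ℝ)+2)*t)| + |(1 - lam) * Real.sin ((m:ℝ)*t)| := abs_add_le _ _
        _ ≤ ((m:ℝ)+2) * (2*w) + b * (((m:ℝ)+2) * (2*w)) := by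
            refine add_le_add b1 ?_
            rw [abs_mul, ← hb_def]
            exact mul_le_mul_of_nonneg_left b2 hb
        _ = (1 + b) * (((m:ℝ)+2) * (2*w)) := by ring
    have hEsmall : E ≤ (1 + b) * ((m:ℝ) + 2) := by
      rcases eq_or_lt_of_le hw0 with hw | hw
      · have hy01 : y * (1 - y) = 0 := by
          have h0 : Real.sqrt (y * (1-y)) = 0 := by rw [← hw_def, ← hw]
          exact (Real.sqrt_eq_zero hyy).mp h0
        have hED : E = D := by
          rcases mul_eq_zero.mp hy01 with h | h
          · rw [hE_def, h, show (1 - 2*(0:ℝ)) = 1 by norm_num, heval1,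
              abs_of_pos (div_pos hD h2p)]
            field_simp
          · have hy : y = 1 := by linarith
            rw [hE_def, hy, show (1 - 2*(1:ℝ)) = -1 by norm_num, Ustar_eval_negone',
              show ((-1:ℝ)^(m+1) * ((2 - lam) * (((m+1:ℕ):ℝ) - 1) + 2) / 2 ^ (m+1))
                = (-1:ℝ)^(m+1) * (D / 2 ^ (m+1)) by rw [hD_def, hN_def, ha_def]; ring,
              abs_mul, abs_pow, abs_neg, abs_one, one_pow, one_mul,
              abs_of_pos (div_pos hD h2p)]
            field_simp
        rw [hED, hD_def, hNval]
        nlinarith [mul_le_mul_of_nonneg_right hab (by linarith : (0:ℝ) ≤ (m:ℝ))]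
      · have h2 : E * (2*w) ≤ (1 + b) * (((m:ℝ)+2) * (2*w)) := by rw [hES]; exact hS2
        have := mul_lt_mul_of_pos_left hw (by norm_num : (0:ℝ) < 2)
        exact le_of_mul_le_mul_right (by linarith) (by linarith : (0:ℝ) < 2*w)
    have hres : |residualCheb (m+1) lam y| = E / D := by
      simp only [residualCheb]
      rw [heval1, abs_div, abs_of_pos (div_pos hD h2p),
        div_div_eq_mul_div, hE_def]
    rw [hres]
    have hE1' : E * (2*w) ≤ 1 + b := by rw [hES]; exact hS1
    have hgoal : E * (a * c) ≤ (1 + b) * D := by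
      rw [hc_def, hD_def, hNval, show (m:ℝ)+1-1 = (m:ℝ) from by ring]
      exact key_ineq a b w (m:ℝ) E ha hb hmR hw0 hE0 hEsmall hE1'
    rw [show (1 + b)/a * (1/c) = (1+b)/(a*c) by rw [div_mul_div_comm, mul_one],
      div_le_div_iff₀ hD (mul_pos ha hc)]
    exact hgoal
  constructor
  · exact main
  · rintro y ⟨hy0, hy1⟩
    have h1 := main y ⟨hy0, hy1⟩
    set w : ℝ := Real.sqrt (y * (1 - y)) with hw_def
    clear_value w
    have hw0 : 0 ≤ w := by rw [hw_def]; exact Real.sqrt_nonneg _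
    have hmm : (0:ℝ) < N - 1 := by rw [hNval]; linarith
    have hc : (0:ℝ) < 1/4 + w * (N - 1) := by nlinarith [mul_nonneg hw0 hmm.le]
    have key2 : w * ((1 + b)/a * (1/(1/4 + w*(N-1)))) ≤ (1 + b)/(a*(N-1)) := by
      have e : w * ((1+b)/a * (1/(1/4 + w*(N-1)))) = ((1+b)*w)/(a*(1/4 + w*(N-1))) := by
        field_simp
      rw [e, div_le_div_iff₀ (mul_pos ha hc) (mul_pos ha hmm)]
      nlinarith [mul_nonneg (mul_nonneg (by linarith : (0:ℝ) ≤ 1+b) ha.le)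
        (by norm_num : (0:ℝ) ≤ (1:ℝ)/4)]
    calc w * |residualCheb (m+1) lam y|
        ≤ w * ((1 + b)/a * (1/(1/4 + w*(N-1)))) := mul_le_mul_of_nonneg_left h1 hw0
      _ ≤ (1 + b)/(a*(N-1)) := key2

end
end

section
/- Assume β_k > 0 for all k ≥ 1, let m ≥ 1 and n ≥ 1. Then: (i) for every λ > 0 the polynomial P*_n(·, λ, m) has at least one real root; (ii) if 0 < λ₁ ≤ λ₂ then the largest real root of P*_n(·, λ₁, m) is less than or equal to the largest real root of P*_n(·, λ₂, m), and the smallest real root of P*_n(·, λ₁, m) is greater than or equal to the smallest real root of P*_n(·, λ₂, m); (iii) if n ≤ m then P*_n(·, λ, m) = P_n for every λ; (iv) if n > m and 0 < λ₁ < λ₂ then the inequalities in (ii) are strict; in particular, for every λ > 1 and n > m the largest real root of P*_n(·, λ, m) is strictly larger than the largest real root of P_n and the smallest real root of P*_n(·, λ, m) is strictly smaller than the smallest real root of P_n. -/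
open Polynomial Filter

noncomputable section

/-- Monic polynomials `P_0 = 1`, `P_1 = X`, `P_{k+1} = X·P_k − β_k·P_{k−1}` (`k ≥ 1`). -/
def recP (β : ℕ → ℝ) : ℕ → Polynomial ℝ
  | 0 => 1
  | 1 => X
  | (k + 2) => X * recP β (k + 1) - C (β (k + 1)) * recP β k

/-- Co-dilated polynomials: same recurrence as `recP β`, except that at index `k = m`
the coefficient `β_m` is replaced by `λ·β_m`. -/
def recPstar (β : ℕ → ℝ) (lam : ℝ) (m : ℕ) : ℕ → Polynomial ℝ
  | 0 => 1
  | 1 => X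
  | (k + 2) => X * recPstar β lam m (k + 1) -
      C (if k + 1 = m then lam * β (k + 1) else β (k + 1)) * recPstar β lam m k

/-- The `m`-th numerator polynomials: `P^{(m)}_0 = 1`, `P^{(m)}_1 = X`,
`P^{(m)}_{k+1} = X·P^{(m)}_k − β_{k+m}·P^{(m)}_{k−1}` (`k ≥ 1`). -/
def recPnum (β : ℕ → ℝ) (m : ℕ) : ℕ → Polynomial ℝ
  | 0 => 1
  | 1 => X
  | (k + 2) => X * recPnum β m (k + 1) - C (β (k + 1 + m)) * recPnum β m k


def recB (β : ℕ → ℝ) (m : ℕ) : ℕ → Polynomial ℝ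
  | 0 => 0
  | 1 => 1
  | (j+2) => X * recB β m (j+1) - C (β (m + j + 1)) * recB β m j

lemma recPstar_add2 (β : ℕ → ℝ) (lam : ℝ) (m k : ℕ) :
    recPstar β lam m (k+2) = X * recPstar β lam m (k+1) -
      C (if k + 1 = m then lam * β (k + 1) else β (k + 1)) * recPstar β lam m k := rfl

lemma recB_add2 (β : ℕ → ℝ) (m j : ℕ) :
    recB β m (j+2) = X * recB β m (j+1) - C (β (m + j + 1)) * recB β m j := rfl

lemma recP_add2 (γ : ℕ → ℝ) (k : ℕ) :
    recP γ (k+2) = X * recP γ (k+1) - C (γ (k+1)) * recP γ k := rfl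

lemma recP_monic (γ : ℕ → ℝ) : ∀ n : ℕ, (recP γ n).Monic ∧ (recP γ n).degree = n := by
  intro n
  induction n using Nat.strong_induction_on with
  | _ n ih =>
    match n with
    | 0 => exact ⟨monic_one, degree_one⟩
    | 1 => exact ⟨monic_X, degree_X⟩
    | (k+2) =>
      obtain ⟨h1m, h1d⟩ := ih (k+1) (by omega)
      have hXm : (X * recP γ (k+1)).Monic := monic_X.mul h1m
      have hXd : (X * recP γ (k+1)).degree = ((k+2 : ℕ) : WithBot ℕ) := by
        rw [degree_mul, degree_X, h1d]
        norm_cast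
        omega
      have h2 : (-(C (γ (k+1)) * recP γ k)).degree < (X * recP γ (k+1)).degree := by
        rw [degree_neg, hXd]
        refine lt_of_le_of_lt (degree_mul_le _ _) ?_
        have : (recP γ k).degree = k := (ih k (by omega)).2
        refine lt_of_le_of_lt (add_le_add degree_C_le (le_of_eq this)) ?_
        rw [zero_add]
        exact_mod_cast (by omega : k < k + 2)
      constructor
      · rw [recP_add2, sub_eq_add_neg]
        exact hXm.add_of_left h2
      · rw [recP_add2, sub_eq_add_neg, degree_add_eq_left_of_degree_lt h2, hXd]

lemma monic_pos_of_roots_le (p : Polynomial ℝ) (hm : p.Monic) (hd : 0 < p.degree)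
    (s : ℝ) (hub : ∀ x, p.IsRoot x → x ≤ s) : ∀ x, s < x → 0 < p.eval x := by
  intro x hx
  by_contra hle
  push_neg at hle
  have htt : Tendsto (fun y => p.eval y) atTop atTop :=
    p.tendsto_atTop_of_leadingCoeff_nonneg hd (by rw [hm.leadingCoeff]; norm_num)
  obtain ⟨y, hy0, hyx⟩ := ((htt.eventually_gt_atTop 0).and (eventually_gt_atTop x)).exists
  rcases lt_or_eq_of_le hle with hlt | heq
  · obtain ⟨r, hrmem, hr0⟩ := intermediate_value_Ioo hyx.le
      (p.continuous_aeval.continuousOn) (Set.mem_Ioo.mpr ⟨hlt, hy0⟩)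
    exact absurd (hub r hr0) (not_le.mpr (lt_trans hx hrmem.1))
  · exact absurd (hub x heq) (not_le.mpr hx)

lemma chain (γ : ℕ → ℝ) (hγ : ∀ k, 1 ≤ k → 0 < γ k) :
    ∀ n, 1 ≤ n → ∃ s : ℝ, (recP γ n).IsRoot s ∧
      (∀ k, k < n → 0 < (recP γ k).eval s) ∧
      (∀ k, k ≤ n → ∀ x, s < x → 0 < (recP γ k).eval x) := by
  intro n hn
  induction n, hn using Nat.le_induction with
  | base =>
    refine ⟨0, by simp [recP, IsRoot], ?_, ?_⟩
    · intro k hk; interval_cases k; simp [recP]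
    · intro k hk x hx
      interval_cases k
      · simp [recP]
      · simpa [recP] using hx
  | succ n hn ih =>
    obtain ⟨s, hroot, hlt, hgt⟩ := ih
    obtain ⟨j, rfl⟩ : ∃ j, n = j + 1 := ⟨n-1, by omega⟩
    have hneg : (recP γ (j+2)).eval s < 0 := by
      have h1 : (recP γ (j+2)).eval s
          = s * (recP γ (j+1)).eval s - γ (j+1) * (recP γ j).eval s := by
        rw [recP_add2]; simp
      rw [h1, IsRoot.eq_zero hroot]
      have hg := hγ (j+1) (by omega)
      have hp := hlt j (by omega)
      nlinarith
    obtain ⟨hm, hd⟩ := recP_monic γ (j+2)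
    have hd0 : 0 < (recP γ (j+2)).degree := by rw [hd]; exact_mod_cast Nat.succ_pos (j+1)
    have htt : Tendsto (fun y => (recP γ (j+2)).eval y) atTop atTop :=
      (recP γ (j+2)).tendsto_atTop_of_leadingCoeff_nonneg hd0 (by rw [hm.leadingCoeff]; norm_num)
    obtain ⟨y, hy0, hys⟩ := ((htt.eventually_gt_atTop 0).and (eventually_gt_atTop s)).exists
    obtain ⟨r, hrmem, hr0⟩ := intermediate_value_Ioo hys.le
      ((recP γ (j+2)).continuous_aeval.continuousOn) (Set.mem_Ioo.mpr ⟨hneg, hy0⟩)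
    have hne : recP γ (j+2) ≠ 0 := hm.ne_zero
    set T := (recP γ (j+2)).roots.toFinset with hT
    have hmemT : ∀ z : ℝ, z ∈ T ↔ (recP γ (j+2)).IsRoot z := by
      intro z; rw [hT, Multiset.mem_toFinset, mem_roots hne]
    have hrT : r ∈ T := (hmemT r).mpr hr0
    have hTne : T.Nonempty := ⟨r, hrT⟩
    refine ⟨T.max' hTne, (hmemT _).mp (T.max'_mem hTne), ?_, ?_⟩
    · intro k hk
      exact hgt k (by omega) _ (lt_of_lt_of_le hrmem.1 (T.le_max' r hrT))
    · intro k hk x hx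
      have hs' : s < T.max' hTne := lt_of_lt_of_le hrmem.1 (T.le_max' r hrT)
      by_cases hk2 : k = j + 2
      · subst hk2
        exact monic_pos_of_roots_le _ hm hd0 (T.max' hTne)
          (fun z hz => T.le_max' z ((hmemT z).mpr hz)) x hx
      · exact hgt k (by omega) x (lt_trans hs' hx)

lemma chain' (γ : ℕ → ℝ) (hγ : ∀ k, 1 ≤ k → 0 < γ k) (n : ℕ) (hn : 1 ≤ n) :
    ∃ s : ℝ, (recP γ n).IsRoot s ∧ sSup {x : ℝ | (recP γ n).IsRoot x} = s ∧
      (∀ k, k < n → 0 < (recP γ k).eval s) ∧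
      (∀ k, k ≤ n → ∀ x, s < x → 0 < (recP γ k).eval x) := by
  obtain ⟨s, h1, h2, h3⟩ := chain γ hγ n hn
  have hub : ∀ x, (recP γ n).IsRoot x → x ≤ s := by
    intro x hx
    by_contra h
    exact absurd hx.eq_zero (ne_of_gt (h3 n le_rfl x (not_le.mp h)))
  have hfin : {x : ℝ | (recP γ n).IsRoot x}.Finite :=
    Polynomial.finite_setOf_isRoot (recP_monic γ n).1.ne_zero
  refine ⟨s, h1, le_antisymm (csSup_le ⟨s, h1⟩ hub) (le_csSup hfin.bddAbove h1), h2, h3⟩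

lemma recP_eval_neg (γ : ℕ → ℝ) : ∀ (n : ℕ) (x : ℝ),
    (recP γ n).eval (-x) = (-1)^n * (recP γ n).eval x := by
  intro n
  induction n using Nat.strong_induction_on with
  | _ n ih =>
    match n with
    | 0 => intro x; simp [recP]
    | 1 => intro x; simp [recP]
    | (k+2) =>
      intro x
      simp only [recP_add2, eval_sub, eval_mul, eval_X, eval_C,
        ih (k+1) (by omega), ih k (by omega)]
      ring


lemma recPstar_eq (β : ℕ → ℝ) (lam : ℝ) (m : ℕ) :
    ∀ k, recPstar β lam m k = recP (fun j => if j = m then lam * β j else β j) k := by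
  intro k
  induction k using Nat.strong_induction_on with
  | _ k ih =>
    match k with
    | 0 => rfl
    | 1 => rfl
    | (j+2) =>
      rw [recPstar_add2, recP_add2, ih (j+1) (by omega), ih j (by omega)]

lemma recPstar_of_le (β : ℕ → ℝ) (lam : ℝ) (m : ℕ) :
    ∀ k, k ≤ m → recPstar β lam m k = recP β k := by
  intro k
  induction k using Nat.strong_induction_on with
  | _ k ih =>
    match k with
    | 0 => intro _; rfl
    | 1 => intro _; rfl
    | (j+2) =>
      intro h
      rw [recPstar_add2, recP_add2, if_neg (by omega), ih (j+1) (by omega) (by omega),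
        ih j (by omega) (by omega)]

lemma recPstar_one (β : ℕ → ℝ) (m : ℕ) (k : ℕ) : recPstar β 1 m k = recP β k := by
  rw [recPstar_eq]
  congr 1
  funext j
  split_ifs <;> simp

lemma diff_eval (β : ℕ → ℝ) (m' : ℕ) (lam₁ lam₂ : ℝ) :
    ∀ (j : ℕ) (x : ℝ), (recPstar β lam₁ (m'+1) (m'+1+j)).eval x =
      (recPstar β lam₂ (m'+1) (m'+1+j)).eval x +
      (lam₂ - lam₁) * β (m'+1) * (recP β m').eval x * (recB β (m'+1) j).eval x := by
  intro j
  induction j using Nat.strong_induction_on with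
  | _ j ih =>
    match j with
    | 0 =>
      intro x
      rw [recPstar_of_le β lam₁ (m'+1) (m'+1) le_rfl, recPstar_of_le β lam₂ (m'+1) (m'+1) le_rfl]
      simp [recB]
    | 1 =>
      intro x
      have h2 : m' + 1 + 1 = m' + 2 := rfl
      rw [h2, recPstar_add2, recPstar_add2,
        recPstar_of_le β lam₁ (m'+1) (m'+1) le_rfl, recPstar_of_le β lam₂ (m'+1) (m'+1) le_rfl,
        recPstar_of_le β lam₁ (m'+1) m' (by omega), recPstar_of_le β lam₂ (m'+1) m' (by omega)]
      simp only [recB, eval_sub, eval_mul, eval_X, eval_C, eval_one, eq_self_iff_true, if_true]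
      ring
    | (j+2) =>
      intro x
      have h2 : m' + 1 + (j + 2) = (m' + 1 + j) + 2 := by omega
      rw [h2, recPstar_add2, recPstar_add2, recB_add2]
      rw [if_neg (show ¬(m' + 1 + j + 1 = m' + 1) from by omega),
        if_neg (show ¬(m' + 1 + j + 1 = m' + 1) from by omega)]
      have ih1 := ih (j+1) (by omega) x
      have ih0 := ih j (by omega) x
      rw [show m' + 1 + (j+1) = m' + 1 + j + 1 from by omega] at ih1
      simp only [eval_sub, eval_mul, eval_X, eval_C, ih1, ih0]
      ring

lemma casoratian (β : ℕ → ℝ) (m : ℕ) (hm : 1 ≤ m) (lam : ℝ) :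
    ∀ (j : ℕ) (x : ℝ),
      (recPstar β lam m (m+j+1)).eval x * (recB β m j).eval x -
      (recPstar β lam m (m+j)).eval x * (recB β m (j+1)).eval x =
      -(∏ i ∈ Finset.range j, β (m+1+i)) * (recP β m).eval x := by
  intro j
  induction j with
  | zero =>
    intro x
    rw [show m + 0 = m from rfl, recPstar_of_le β lam m m le_rfl]
    simp [recB]
  | succ j ih =>
    intro x
    have h2 : m + (j+1) + 1 = (m + j) + 2 := by omega
    have h1 : m + (j+1) = m + j + 1 := by omega
    rw [h2, h1, recPstar_add2, if_neg (by omega), show j+1+1 = j+2 from rfl, recB_add2]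
    have ihx := ih x
    simp only [eval_sub, eval_mul, eval_X, eval_C, Finset.prod_range_succ]
    rw [show m + 1 + j = m + j + 1 from by omega]
    linear_combination β (m + j + 1) * ihx

lemma sInf_eq_neg_sSup_of_symm (S : Set ℝ) (h : ∀ x ∈ S, -x ∈ S) : sInf S = -sSup S := by
  rw [Real.sInf_def]
  have : -S = S := by
    ext x
    simp only [Set.mem_neg]
    exact ⟨fun hx => by simpa using h (-x) hx, fun hx => h x hx⟩
  rw [this]


theorem codilated_extremal_roots (β : ℕ → ℝ) (hβ : ∀ k, 1 ≤ k → 0 < β k)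
    (m n : ℕ) (hm : 1 ≤ m) (hn : 1 ≤ n) :
    (∀ lam : ℝ, 0 < lam → ∃ x : ℝ, (recPstar β lam m n).IsRoot x) ∧
    (∀ lam₁ lam₂ : ℝ, 0 < lam₁ → lam₁ ≤ lam₂ →
      sSup {x : ℝ | (recPstar β lam₁ m n).IsRoot x} ≤
        sSup {x : ℝ | (recPstar β lam₂ m n).IsRoot x} ∧
      sInf {x : ℝ | (recPstar β lam₂ m n).IsRoot x} ≤
        sInf {x : ℝ | (recPstar β lam₁ m n).IsRoot x}) ∧
    (n ≤ m → ∀ lam : ℝ, recPstar β lam m n = recP β n) ∧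
    (m < n → ∀ lam₁ lam₂ : ℝ, 0 < lam₁ → lam₁ < lam₂ →
      sSup {x : ℝ | (recPstar β lam₁ m n).IsRoot x} <
        sSup {x : ℝ | (recPstar β lam₂ m n).IsRoot x} ∧
      sInf {x : ℝ | (recPstar β lam₂ m n).IsRoot x} <
        sInf {x : ℝ | (recPstar β lam₁ m n).IsRoot x}) ∧
    (m < n → ∀ lam : ℝ, 1 < lam →
      sSup {x : ℝ | (recP β n).IsRoot x} <
        sSup {x : ℝ | (recPstar β lam m n).IsRoot x} ∧
      sInf {x : ℝ | (recPstar β lam m n).IsRoot x} <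
        sInf {x : ℝ | (recP β n).IsRoot x}) := by
  have key : ∀ lam : ℝ, 0 < lam → ∃ s : ℝ, (recPstar β lam m n).IsRoot s ∧
      sSup {x : ℝ | (recPstar β lam m n).IsRoot x} = s ∧
      (∀ k, k < n → 0 < (recPstar β lam m k).eval s) ∧
      (∀ k, k ≤ n → ∀ x, s < x → 0 < (recPstar β lam m k).eval x) := by
    intro lam hlam
    have hpos : ∀ k, 1 ≤ k → 0 < (fun j => if j = m then lam * β j else β j) k := by
      intro k hk
      by_cases h : k = m
      · simp only [h, if_pos rfl]; exact mul_pos hlam (hβ m hm)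
      · simp only [if_neg h]; exact hβ k hk
    obtain ⟨s, h1, h2, h3, h4⟩ := chain' _ hpos n hn
    exact ⟨s, by rw [recPstar_eq]; exact h1,
      by simp only [recPstar_eq]; exact h2,
      fun k hk => by rw [recPstar_eq]; exact h3 k hk,
      fun k hk x hx => by rw [recPstar_eq]; exact h4 k hk x hx⟩
  have hsymm : ∀ lam : ℝ, sInf {x : ℝ | (recPstar β lam m n).IsRoot x}
      = -sSup {x : ℝ | (recPstar β lam m n).IsRoot x} := by
    intro lam
    apply sInf_eq_neg_sSup_of_symm
    intro x hx
    simp only [Set.mem_setOf_eq, recPstar_eq, IsRoot] at hx ⊢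
    rw [recP_eval_neg, hx, mul_zero]
  obtain ⟨m', rfl⟩ : ∃ m', m = m' + 1 := ⟨m - 1, by omega⟩
  have comp : ∀ lam₁ lam₂ : ℝ, 0 < lam₁ → lam₁ ≤ lam₂ → m' + 1 < n →
      sSup {x : ℝ | (recPstar β lam₁ (m'+1) n).IsRoot x} ≤
        sSup {x : ℝ | (recPstar β lam₂ (m'+1) n).IsRoot x} ∧
      (lam₁ < lam₂ →
        sSup {x : ℝ | (recPstar β lam₁ (m'+1) n).IsRoot x} <
          sSup {x : ℝ | (recPstar β lam₂ (m'+1) n).IsRoot x}) := by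
    intro lam₁ lam₂ h1 h12 hmn
    have h2 : (0:ℝ) < lam₂ := lt_of_lt_of_le h1 h12
    obtain ⟨s₂, hroot₂, hsup₂, hlt₂, hgt₂⟩ := key lam₂ h2
    have hstar_pos : ∀ k, k < n → ∀ x, s₂ ≤ x → 0 < (recPstar β lam₂ (m'+1) k).eval x := by
      intro k hk x hx
      rcases eq_or_lt_of_le hx with rfl | hxx
      · exact hlt₂ k hk
      · exact hgt₂ k (le_of_lt hk) x hxx
    have hstar_nonneg : ∀ x, s₂ ≤ x → 0 ≤ (recPstar β lam₂ (m'+1) n).eval x := by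
      intro x hx
      rcases eq_or_lt_of_le hx with rfl | hxx
      · rw [IsRoot.eq_zero hroot₂]
      · exact le_of_lt (hgt₂ n le_rfl x hxx)
    have hPm'pos : ∀ x, s₂ ≤ x → 0 < (recP β m').eval x := by
      intro x hx
      have h := hstar_pos m' (by omega) x hx
      rwa [recPstar_of_le β lam₂ (m'+1) m' (by omega)] at h
    have hPmpos : ∀ x, s₂ ≤ x → 0 < (recP β (m'+1)).eval x := by
      intro x hx
      have h := hstar_pos (m'+1) (by omega) x hx
      rwa [recPstar_of_le β lam₂ (m'+1) (m'+1) le_rfl] at h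
    set J := n - (m'+1) with hJdef
    have hnJ : n = m' + 1 + J := by omega
    have hJ1 : 1 ≤ J := by omega
    have hB : ∀ j, j ≤ J → ∀ x, s₂ ≤ x →
        0 ≤ (recB β (m'+1) j).eval x ∧ (1 ≤ j → 0 < (recB β (m'+1) j).eval x) := by
      intro j
      induction j using Nat.strong_induction_on with
      | _ j ih =>
        match j with
        | 0 => intro _ x hx; simp [recB]
        | 1 => intro _ x hx; simp [recB]
        | (j+2) =>
          intro hj x hx
          have hcas := casoratian β (m'+1) (by omega) lam₂ (j+1) x
          rw [show m'+1+(j+1)+1 = m'+1+j+2 from by omega,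
            show m'+1+(j+1) = m'+1+j+1 from by omega,
            show j+1+1 = j+2 from rfl] at hcas
          have hc : 0 < ∏ i ∈ Finset.range (j+1), β (m'+1+1+i) :=
            Finset.prod_pos fun i _ => hβ _ (by omega)
          have hden : 0 < (recPstar β lam₂ (m'+1) (m'+1+j+1)).eval x :=
            hstar_pos _ (by omega) x hx
          have hnum : 0 ≤ (recPstar β lam₂ (m'+1) (m'+1+j+2)).eval x := by
            rcases lt_or_eq_of_le (show m'+1+j+2 ≤ n from by omega) with hlt' | heq'
            · exact le_of_lt (hstar_pos _ hlt' x hx)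
            · rw [heq']; exact hstar_nonneg x hx
          have hb1 := (ih (j+1) (by omega) (by omega) x hx).2 (by omega)
          have hPm := hPmpos x hx
          have key2 : 0 < (recB β (m'+1) (j+2)).eval x := by
            nlinarith [hcas, mul_pos hc hPm,
              mul_nonneg hnum (le_of_lt hb1)]
          exact ⟨le_of_lt key2, fun _ => key2⟩
    have heval : ∀ x : ℝ, (recPstar β lam₁ (m'+1) n).eval x
        = (recPstar β lam₂ (m'+1) n).eval x
          + (lam₂ - lam₁) * β (m'+1) * (recP β m').eval x * (recB β (m'+1) J).eval x := by
      intro x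
      have h := diff_eval β m' lam₁ lam₂ J x
      rwa [← hnJ] at h
    have hβm : 0 < β (m'+1) := hβ (m'+1) (by omega)
    have hno : ∀ x, s₂ < x → ¬ (recPstar β lam₁ (m'+1) n).IsRoot x := by
      intro x hx hroot
      have e := heval x
      rw [IsRoot.eq_zero hroot] at e
      have t1 := hgt₂ n le_rfl x hx
      have t3 := hPm'pos x (le_of_lt hx)
      have t4 := (hB J le_rfl x (le_of_lt hx)).2 hJ1
      nlinarith [mul_nonneg (mul_nonneg (mul_nonneg
        (by linarith : (0:ℝ) ≤ lam₂ - lam₁) (le_of_lt hβm)) (le_of_lt t3)) (le_of_lt t4)]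
    obtain ⟨s₁, hroot₁, hsup₁, _, _⟩ := key lam₁ h1
    have hs₁ : s₁ ≤ s₂ := by
      by_contra h
      exact hno s₁ (not_le.mp h) hroot₁
    constructor
    · rw [hsup₁, hsup₂]; exact hs₁
    · intro hstrict
      rw [hsup₁, hsup₂]
      rcases lt_or_eq_of_le hs₁ with h | h
      · exact h
      · exfalso
        have e := heval s₂
        have hz : (recPstar β lam₁ (m'+1) n).eval s₂ = 0 := by
          rw [← h]; exact IsRoot.eq_zero hroot₁
        rw [hz, IsRoot.eq_zero hroot₂] at e
        have t3 := hPm'pos s₂ le_rfl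
        have t4 := (hB J le_rfl s₂ le_rfl).2 hJ1
        nlinarith [mul_pos (mul_pos (mul_pos
          (by linarith : (0:ℝ) < lam₂ - lam₁) hβm) t3) t4]
  refine ⟨?_, ?_, ?_, ?_, ?_⟩
  · intro lam hlam
    obtain ⟨s, hs, -⟩ := key lam hlam
    exact ⟨s, hs⟩
  · intro lam₁ lam₂ h1 h12
    by_cases hnm : n ≤ m' + 1
    · rw [recPstar_of_le β lam₁ (m'+1) n hnm, recPstar_of_le β lam₂ (m'+1) n hnm]
      exact ⟨le_rfl, le_rfl⟩
    · obtain ⟨hle, -⟩ := comp lam₁ lam₂ h1 h12 (by omega)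
      refine ⟨hle, ?_⟩
      rw [hsymm lam₁, hsymm lam₂]
      linarith
  · intro h lam
    exact recPstar_of_le β lam (m'+1) n h
  · intro hmn lam₁ lam₂ h1 h12
    obtain ⟨-, hstrict⟩ := comp lam₁ lam₂ h1 (le_of_lt h12) hmn
    refine ⟨hstrict h12, ?_⟩
    rw [hsymm lam₁, hsymm lam₂]
    have := hstrict h12
    linarith
  · intro hmn lam hlam
    have h := comp 1 lam one_pos (le_of_lt hlam) hmn
    obtain ⟨-, hstrict⟩ := h
    have hs := hstrict hlam
    rw [recPstar_one β (m'+1) n] at hs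
    constructor
    · exact hs
    · have e1 := hsymm lam
      have e2 := hsymm 1
      rw [recPstar_one β (m'+1) n] at e2
      rw [e1, e2]
      linarith

end
end

section
/- Assume β_k > 0 for all k ≥ 1, let m ≥ 1 and n ≥ 1. For λ > 0 let Z(λ) = { y ∈ ℝ : y ≤ 1 and P*_{2n}(√(1−y), λ, m) = 0 }, where √ denotes the nonnegative real square root; Z(λ) is the set of zeros of the asymmetric residual polynomial y ↦ P*_{2n}(√(1−y), λ, m)/P*_{2n}(1, λ, m). Then Z(λ) is nonempty and finite, and if 0 < λ₁ ≤ λ₂ then min Z(λ₂) ≤ min Z(λ₁); if moreover 2n > m and λ₁ < λ₂ then min Z(λ₂) < min Z(λ₁), i.e. the smallest zero of the asymmetric residual polynomial is a decreasing function of the dilation parameter λ. -/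
open Polynomial Filter

noncomputable section

/-- The zero set of the asymmetric residual polynomial
`y ↦ P*_{2n}(√(1−y), λ, m)/P*_{2n}(1, λ, m)`. -/
def asymZeros (β : ℕ → ℝ) (lam : ℝ) (m n : ℕ) : Set ℝ :=
  {y : ℝ | y ≤ 1 ∧ (recPstar β lam m (2 * n)).eval (Real.sqrt (1 - y)) = 0}

/-! ### Generic lemmas about three-term recurrences -/

/-- Monicity and degree for a generic three-term recurrence family. -/
lemma rec_monic (P : ℕ → Polynomial ℝ) (c : ℕ → ℝ) (h0 : P 0 = 1) (h1 : P 1 = X)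
    (hrec : ∀ k, P (k + 2) = X * P (k + 1) - C (c (k + 1)) * P k) :
    ∀ k, (P k).Monic ∧ (P k).natDegree = k := by
  have H : ∀ k, ((P k).Monic ∧ (P k).natDegree = k) ∧
      ((P (k+1)).Monic ∧ (P (k+1)).natDegree = k+1) := by
    intro k
    induction k with
    | zero =>
      refine ⟨⟨by simp [h0, monic_one], by simp [h0]⟩, ⟨by simp [h1, monic_X], by simp [h1]⟩⟩
    | succ k ih =>
      refine ⟨ih.2, ?_⟩
      have hm1 : (P (k+1)).Monic := ih.2.1
      have hd1 : (P (k+1)).degree = ((k+1 : ℕ) : WithBot ℕ) := by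
        rw [degree_eq_natDegree hm1.ne_zero, ih.2.2]
      have hdX : (X * P (k+1)).degree = ((k+2 : ℕ) : WithBot ℕ) := by
        rw [degree_mul, degree_X, hd1]
        exact_mod_cast (by omega : 1 + (k + 1) = k + 2)
      have hmX : (X * P (k+1)).Monic := monic_X.mul hm1
      have hdC : (-(C (c (k+1)) * P k)).degree < ((k+2 : ℕ) : WithBot ℕ) := by
        rw [degree_neg]
        have hb : (C (c (k+1)) * P k).degree ≤ ((k : ℕ) : WithBot ℕ) := by
          refine le_trans (degree_mul_le _ _) ?_
          rw [← zero_add ((k : ℕ) : WithBot ℕ)]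
          exact add_le_add degree_C_le (degree_le_natDegree.trans (le_of_eq (by rw [ih.1.2])))
        exact lt_of_le_of_lt hb (by exact_mod_cast (by omega : k < k + 2))
      have heq : P (k+2) = X * P (k+1) + -(C (c (k+1)) * P k) := by
        rw [hrec k]; ring
      constructor
      · rw [heq]; exact hmX.add_of_left (by rw [hdX]; exact hdC)
      · have hdeg : (P (k+2)).degree = ((k+2 : ℕ) : WithBot ℕ) := by
          rw [heq, degree_add_eq_left_of_degree_lt (by rw [hdX]; exact hdC), hdX]
        exact natDegree_eq_of_degree_eq_some hdeg
  exact fun k => (H k).1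

/-- A monic polynomial that is negative somewhere has a root to the right. -/
lemma exists_root_gt (p : Polynomial ℝ) (hm : p.Monic) (hd : 0 < p.degree) (a : ℝ)
    (ha : p.eval a < 0) : ∃ x, a < x ∧ p.eval x = 0 := by
  have ht := p.tendsto_atTop_of_leadingCoeff_nonneg hd (by rw [hm.leadingCoeff]; norm_num)
  obtain ⟨b, hb1, hb2⟩ := ((ht.eventually_ge_atTop 1).and (eventually_ge_atTop a)).exists
  have hab : a ≤ b := hb2
  have h0 : (0 : ℝ) ∈ Set.Icc (p.eval a) (p.eval b) := ⟨ha.le, by linarith⟩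
  obtain ⟨x, hx, hx0⟩ := intermediate_value_Icc hab (p.continuous.continuousOn) h0
  have hx0' : p.eval x = 0 := hx0
  refine ⟨x, lt_of_le_of_ne hx.1 ?_, hx0'⟩
  rintro rfl
  rw [hx0'] at ha; exact lt_irrefl _ ha

/-- The key structural lemma: a three-term recurrence family with positive coefficients has,
for each `k ≥ 1`, a largest root `ξ` such that all family members up to `k` are positive
beyond `ξ`, and all earlier members are positive at `ξ`. -/
lemma rec_key (P : ℕ → Polynomial ℝ) (c : ℕ → ℝ) (h0 : P 0 = 1) (h1 : P 1 = X)
    (hrec : ∀ k, P (k + 2) = X * P (k + 1) - C (c (k + 1)) * P k)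
    (hc : ∀ j, 1 ≤ j → 0 < c j) :
    ∀ k, 1 ≤ k → ∃ ξ : ℝ,
      (P k).eval ξ = 0 ∧
      (∀ x, ξ < x → ∀ j, j ≤ k → 0 < (P j).eval x) ∧
      (∀ j, j < k → 0 < (P j).eval ξ) := by
  have hmon := rec_monic P c h0 h1 hrec
  have hdeg : ∀ k, 0 < k → 0 < (P k).degree := by
    intro k hk
    rw [degree_eq_natDegree (hmon k).1.ne_zero, (hmon k).2]
    exact_mod_cast hk
  intro k hk
  induction k with
  | zero => omega
  | succ k ih =>
    rcases Nat.eq_or_lt_of_le hk with hk1 | hk1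
    · -- k + 1 = 1
      refine ⟨0, ?_, ?_, ?_⟩
      · rw [← hk1, h1, eval_X]
      · intro x hx j hj
        rw [← hk1] at hj
        interval_cases j
        · simp [h0]
        · simpa [h1] using hx
      · intro j hj
        rw [← hk1] at hj
        interval_cases j
        simp [h0]
    · -- k ≥ 1
      have hk' : 1 ≤ k := by omega
      obtain ⟨ξ, hξ0, hξ2, hξ3⟩ := ih hk'
      obtain ⟨k', rfl⟩ : ∃ k', k = k' + 1 := ⟨k - 1, by omega⟩
      have hneg : (P (k' + 2)).eval ξ < 0 := by
        rw [hrec k']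
        simp only [eval_sub, eval_mul, eval_X, eval_C, hξ0, mul_zero, zero_sub, neg_neg,
          neg_lt_zero]
        exact mul_pos (hc (k' + 1) (by omega)) (hξ3 k' (by omega))
      obtain ⟨x₀, hx₀1, hx₀2⟩ := exists_root_gt (P (k'+2)) (hmon _).1 (hdeg _ (by omega)) ξ hneg
      set p := P (k' + 2) with hp
      have hpne : p ≠ 0 := (hmon _).1.ne_zero
      have hx₀R : x₀ ∈ p.roots.toFinset := by
        rw [Multiset.mem_toFinset, mem_roots hpne]
        exact hx₀2
      set ξ' := p.roots.toFinset.max' ⟨x₀, hx₀R⟩ with hξ'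
      have hξ'root : p.eval ξ' = 0 := by
        have hmem := p.roots.toFinset.max'_mem ⟨x₀, hx₀R⟩
        rw [Multiset.mem_toFinset, mem_roots hpne] at hmem
        exact hmem
      have hξξ' : ξ < ξ' := lt_of_lt_of_le hx₀1 (p.roots.toFinset.le_max' x₀ hx₀R)
      have hpos : ∀ x, ξ' < x → 0 < p.eval x := by
        intro x hx
        rcases lt_trichotomy (p.eval x) 0 with h | h | h
        · obtain ⟨y, hy1, hy2⟩ := exists_root_gt p (hmon _).1 (hdeg _ (by omega)) x h
          have hyR : y ∈ p.roots.toFinset := by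
            rw [Multiset.mem_toFinset, mem_roots hpne]; exact hy2
          have := p.roots.toFinset.le_max' y hyR
          exact absurd (lt_of_lt_of_le (hx.trans hy1) this) (lt_irrefl _)
        · exfalso
          have hxR : x ∈ p.roots.toFinset := by
            rw [Multiset.mem_toFinset, mem_roots hpne]; exact h
          exact absurd (lt_of_lt_of_le hx (p.roots.toFinset.le_max' x hxR)) (lt_irrefl _)
        · exact h
      refine ⟨ξ', hξ'root, ?_, ?_⟩
      · intro x hx j hj
        rcases Nat.lt_or_ge j (k' + 2) with hj' | hj'
        · exact hξ2 x (hξξ'.trans hx) j (by omega)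
        · have hje : j = k' + 2 := by omega
          rw [hje]; exact hpos x hx
      · intro j hj
        exact hξ2 ξ' hξξ' j (by omega)

/-! ### Relating the specific families to the generic lemmas -/

lemma recPstar_rec (β : ℕ → ℝ) (lam : ℝ) (m : ℕ) (k : ℕ) :
    recPstar β lam m (k + 2) = X * recPstar β lam m (k + 1) -
      C (if k + 1 = m then lam * β (k + 1) else β (k + 1)) * recPstar β lam m k := by
  rw [recPstar]

lemma recP_rec (β : ℕ → ℝ) (k : ℕ) :
    recP β (k + 2) = X * recP β (k + 1) - C (β (k + 1)) * recP β k := by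
  rw [recP]

lemma recPnum_rec (β : ℕ → ℝ) (m : ℕ) (k : ℕ) :
    recPnum β m (k + 2) = X * recPnum β m (k + 1) - C (β (k + 1 + m)) * recPnum β m k := by
  rw [recPnum]

lemma recPstar_eq_recP (β : ℕ → ℝ) (lam : ℝ) (m : ℕ) :
    ∀ j, j ≤ m → recPstar β lam m j = recP β j
  | 0, _ => rfl
  | 1, _ => rfl
  | (j+2), h => by
    rw [recPstar_rec, recP_rec, recPstar_eq_recP β lam m (j+1) (by omega),
      recPstar_eq_recP β lam m j (by omega), if_neg (by omega)]

lemma recPstar_monic (β : ℕ → ℝ) (lam : ℝ) (m : ℕ) (k : ℕ) :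
    (recPstar β lam m k).Monic ∧ (recPstar β lam m k).natDegree = k :=
  rec_monic (recPstar β lam m) (fun j => if j = m then lam * β j else β j) rfl rfl
    (recPstar_rec β lam m) k

/-- Key lemma applied to the co-dilated family. -/
lemma star_key (β : ℕ → ℝ) (hβ : ∀ k, 1 ≤ k → 0 < β k) (lam : ℝ) (hlam : 0 < lam)
    (m n : ℕ) (hm : 1 ≤ m) (hn : 1 ≤ n) :
    ∃ ξ : ℝ, 0 < ξ ∧ (recPstar β lam m (2 * n)).eval ξ = 0 ∧
      (∀ x, ξ < x → ∀ j, j ≤ 2 * n → 0 < (recPstar β lam m j).eval x) ∧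
      (∀ j, j < 2 * n → 0 < (recPstar β lam m j).eval ξ) := by
  have hc : ∀ j, 1 ≤ j → 0 < (if j = m then lam * β j else β j) := by
    intro j hj
    split
    · exact mul_pos hlam (hβ j hj)
    · exact hβ j hj
  obtain ⟨ξ, hξ1, hξ2, hξ3⟩ := rec_key (recPstar β lam m)
    (fun j => if j = m then lam * β j else β j) rfl rfl (recPstar_rec β lam m) hc
    (2 * n) (by omega)
  refine ⟨ξ, ?_, hξ1, hξ2, hξ3⟩
  have h1 := hξ3 1 (by omega)
  simpa [show recPstar β lam m 1 = X from rfl] using h1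

/-! ### The splitting identity and the Casoratian -/

/-- Splitting identity:
`P*_{m+k+1} = P^{(m)}_{k+1}·P_m − λβ_m·P^{(m+1)}_k·P_{m−1}` (with `m = m'+1`). -/
lemma split (β : ℕ → ℝ) (lam : ℝ) (m' : ℕ) :
    ∀ k, recPstar β lam (m' + 1) (m' + 1 + (k + 1)) =
      recPnum β (m' + 1) (k + 1) * recP β (m' + 1)
        - C (lam * β (m' + 1)) * (recPnum β (m' + 2) k * recP β m')
  | 0 => by
    have e : m' + 1 + (0 + 1) = m' + 2 := by omega
    rw [e, recPstar_rec, if_pos rfl, recPstar_eq_recP β lam (m'+1) (m'+1) le_rfl,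
      recPstar_eq_recP β lam (m'+1) m' (by omega)]
    show X * recP β (m'+1) - C (lam * β (m'+1)) * recP β m' =
      X * recP β (m'+1) - C (lam * β (m'+1)) * (1 * recP β m')
    ring
  | 1 => by
    have e : m' + 1 + (1 + 1) = (m' + 1) + 2 := by omega
    rw [e, recPstar_rec, if_neg (by omega)]
    have e2 : m' + 1 + 1 = m' + 1 + (0 + 1) := by omega
    rw [e2, split β lam m' 0, recPstar_eq_recP β lam (m'+1) (m'+1) le_rfl]
    have eA : recPnum β (m'+1) (1+1) = X * X - C (β (1 + (m'+1))) * 1 := by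
      rw [show (1+1 : ℕ) = 0 + 2 from rfl, recPnum_rec]
      rfl
    rw [eA, show recPnum β (m'+2) 1 = X from rfl, show recPnum β (m'+2) 0 = 1 from rfl,
      show recPnum β (m'+1) (0+1) = X from rfl]
    have eβ : β (m' + 1 + 1) = β (1 + (m' + 1)) := by ring_nf
    rw [eβ]
    ring
  | (k+2) => by
    have e : m' + 1 + (k + 2 + 1) = (m' + 1 + (k + 1)) + 2 := by omega
    rw [e, recPstar_rec, if_neg (by omega)]
    have e1 : m' + 1 + (k + 1) + 1 = m' + 1 + (k + 1 + 1) := by omega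
    rw [e1]
    rw [split β lam m' (k+1), split β lam m' k]
    have eA : recPnum β (m'+1) (k+2+1) = X * recPnum β (m'+1) (k+1+1)
        - C (β (k + 1 + 1 + (m'+1))) * recPnum β (m'+1) (k+1) := by
      rw [show k+2+1 = (k+1)+2 from rfl, recPnum_rec]
    have eN : recPnum β (m'+2) (k+2) = X * recPnum β (m'+2) (k+1)
        - C (β (k + 1 + (m'+2))) * recPnum β (m'+2) k := recPnum_rec β (m'+2) k
    rw [eA, eN]
    have eβ1 : β (m' + 1 + (k + 1 + 1)) = β (k + 1 + 1 + (m' + 1)) := by ring_nf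
    have eβ2 : β (k + 1 + (m' + 2)) = β (k + 1 + 1 + (m' + 1)) := by ring_nf
    rw [eβ1, eβ2]
    ring

/-- Casoratian identity between numerator families of consecutive shifts. -/
lemma casor (β : ℕ → ℝ) (m : ℕ) :
    ∀ K, recPnum β m (K + 2) * recPnum β (m + 1) K
        - recPnum β m (K + 1) * recPnum β (m + 1) (K + 1)
      = - C (∏ j ∈ Finset.range (K + 1), β (m + 1 + j))
  | 0 => by
    rw [recPnum_rec]
    show (X * X - C (β (0 + 1 + m)) * 1) * 1 - X * X
      = - C (∏ j ∈ Finset.range 1, β (m + 1 + j))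
    rw [Finset.prod_range_one]
    have e : β (0 + 1 + m) = β (m + 1 + 0) := by ring_nf
    rw [e]; ring
  | (K+1) => by
    have eA : recPnum β m (K+1+2) = X * recPnum β m (K + 2)
        - C (β (K + 1 + 1 + m)) * recPnum β m (K+1) := recPnum_rec β m (K+1)
    have eN : recPnum β (m+1) (K+1+1) = X * recPnum β (m+1) (K + 1)
        - C (β (K + 1 + (m+1))) * recPnum β (m+1) K := recPnum_rec β (m+1) K
    rw [eA, eN]
    have eβ : β (K + 1 + (m + 1)) = β (K + 1 + 1 + m) := by ring_nf
    rw [eβ]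
    have hprod : (∏ j ∈ Finset.range (K + 2), β (m + 1 + j))
        = (∏ j ∈ Finset.range (K + 1), β (m + 1 + j)) * β (K + 1 + 1 + m) := by
      rw [Finset.prod_range_succ]
      congr 1
      ring_nf
    rw [hprod, C_mul]
    linear_combination (C (β (K + 1 + 1 + m))) * casor β m K

/-! ### Characterization of `asymZeros` -/

lemma asym_char (β : ℕ → ℝ) (lam : ℝ) (m n : ℕ) (ξ : ℝ) (hξ : 0 < ξ)
    (hne : recPstar β lam m (2 * n) ≠ 0)
    (h1 : (recPstar β lam m (2 * n)).eval ξ = 0)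
    (h2 : ∀ x, ξ < x → 0 < (recPstar β lam m (2 * n)).eval x) :
    (asymZeros β lam m n).Nonempty ∧ (asymZeros β lam m n).Finite ∧
      sInf (asymZeros β lam m n) = 1 - ξ ^ 2 := by
  have hmem : (1 - ξ ^ 2) ∈ asymZeros β lam m n := by
    refine ⟨by nlinarith [sq_nonneg ξ], ?_⟩
    rw [show (1 : ℝ) - (1 - ξ ^ 2) = ξ ^ 2 by ring, Real.sqrt_sq hξ.le]
    exact h1
  have hlb : ∀ y ∈ asymZeros β lam m n, 1 - ξ ^ 2 ≤ y := by
    rintro y ⟨hy1, hy2⟩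
    have ht0 : 0 ≤ Real.sqrt (1 - y) := Real.sqrt_nonneg _
    have ht : Real.sqrt (1 - y) ≤ ξ := by
      by_contra h
      exact absurd hy2 (ne_of_gt (h2 _ (lt_of_not_ge h)))
    have hsq : Real.sqrt (1 - y) ^ 2 = 1 - y := Real.sq_sqrt (by linarith)
    nlinarith
  have hfin : (asymZeros β lam m n).Finite := by
    have hroots := (recPstar β lam m (2 * n)).finite_setOf_isRoot hne
    apply Set.Finite.of_finite_image (f := fun y => Real.sqrt (1 - y))
    · apply hroots.subset
      rintro x ⟨y, ⟨_, hy2⟩, rfl⟩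
      exact hy2
    · rintro y₁ h₁ y₂ h₂ he
      have hsq := congrArg (· ^ 2) he
      simp only at hsq
      rw [Real.sq_sqrt (by linarith [h₁.1]), Real.sq_sqrt (by linarith [h₂.1])] at hsq
      linarith
  refine ⟨⟨_, hmem⟩, hfin, le_antisymm (csInf_le hfin.bddBelow hmem) (le_csInf ⟨_, hmem⟩ hlb)⟩

/-! ### The main monotonicity lemma -/

lemma sInf_strict_mono (β : ℕ → ℝ) (hβ : ∀ k, 1 ≤ k → 0 < β k)
    (m n : ℕ) (hm : 1 ≤ m) (hn : 1 ≤ n) (hmn : m < 2 * n)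
    (lam₁ lam₂ : ℝ) (h1 : 0 < lam₁) (h12 : lam₁ < lam₂) :
    sInf (asymZeros β lam₂ m n) < sInf (asymZeros β lam₁ m n) := by
  have h2 : 0 < lam₂ := h1.trans h12
  obtain ⟨ξ₁, hξ₁0, hξ₁1, hξ₁2, hξ₁3⟩ := star_key β hβ lam₁ h1 m n hm hn
  obtain ⟨ξ₂, hξ₂0, hξ₂1, hξ₂2, hξ₂3⟩ := star_key β hβ lam₂ h2 m n hm hn
  have hS₁ := asym_char β lam₁ m n ξ₁ hξ₁0 (recPstar_monic β lam₁ m (2*n)).1.ne_zero hξ₁1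
    (fun x hx => hξ₁2 x hx (2*n) le_rfl)
  have hS₂ := asym_char β lam₂ m n ξ₂ hξ₂0 (recPstar_monic β lam₂ m (2*n)).1.ne_zero hξ₂1
    (fun x hx => hξ₂2 x hx (2*n) le_rfl)
  rw [hS₁.2.2, hS₂.2.2]
  -- It suffices to show ξ₁ < ξ₂
  suffices hlt : ξ₁ < ξ₂ by nlinarith
  obtain ⟨m', rfl⟩ : ∃ m', m = m' + 1 := ⟨m - 1, by omega⟩
  obtain ⟨d, hd⟩ : ∃ d, 2 * n = m' + 1 + (d + 1) := ⟨2 * n - m' - 2, by omega⟩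
  -- positivity of the numerator polynomial at ξ₁
  have hNpos : 0 < (recPnum β (m' + 2) d).eval ξ₁ := by
    rcases Nat.eq_zero_or_pos d with rfl | hdpos
    · simp [show recPnum β (m'+2) 0 = 1 from rfl]
    · -- apply the key lemma to the numerator family of shift m'+2
      have hcN : ∀ j, 1 ≤ j → 0 < β (j + (m' + 2)) := fun j hj => hβ _ (by omega)
      obtain ⟨ζ, hζ1, hζ2, hζ3⟩ := rec_key (recPnum β (m' + 2)) (fun j => β (j + (m' + 2)))
        rfl rfl (recPnum_rec β (m' + 2)) hcN d hdpos
      have hζlt : ζ < ξ₁ := by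
        by_contra hcon
        push_neg at hcon   -- ξ₁ ≤ ζ
        have hPm : 0 < (recP β (m' + 1)).eval ζ := by
          rcases eq_or_lt_of_le hcon with rfl | hlt'
          · have := hξ₁3 (m' + 1) (by omega)
            rwa [recPstar_eq_recP β lam₁ (m'+1) (m'+1) le_rfl] at this
          · have := hξ₁2 ζ hlt' (m' + 1) (by omega)
            rwa [recPstar_eq_recP β lam₁ (m'+1) (m'+1) le_rfl] at this
        have hq2n : 0 ≤ (recPstar β lam₁ (m' + 1) (2 * n)).eval ζ := by
          rcases eq_or_lt_of_le hcon with rfl | hlt'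
          · rw [hξ₁1]
          · exact (hξ₁2 ζ hlt' (2 * n) le_rfl).le
        have hsplit := split β lam₁ m' d
        rw [← hd] at hsplit
        have hNζ : (recPnum β (m' + 2) d).eval ζ = 0 := hζ1
        have hAnn : 0 ≤ (recPnum β (m' + 1) (d + 1)).eval ζ := by
          have hev := congrArg (eval ζ) hsplit
          simp only [eval_sub, eval_mul, eval_C, hNζ, mul_zero, zero_mul, sub_zero] at hev
          rw [hev] at hq2n
          by_contra hA
          push_neg at hA
          nlinarith
        -- Casoratian contradiction
        obtain ⟨d', rfl⟩ : ∃ d', d = d' + 1 := ⟨d - 1, by omega⟩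
        have hcas := casor β (m' + 1) d'
        have hNprev : 0 < (recPnum β (m' + 1 + 1) d').eval ζ := hζ3 d' (by omega)
        have hprodpos : 0 < ∏ j ∈ Finset.range (d' + 1), β (m' + 1 + 1 + j) :=
          Finset.prod_pos (fun j _ => hβ _ (by omega))
        have hev := congrArg (eval ζ) hcas
        simp only [eval_sub, eval_mul, eval_neg, eval_C] at hev
        have hNζ' : (recPnum β (m' + 1 + 1) (d' + 1)).eval ζ = 0 := by
          have : m' + 1 + 1 = m' + 2 := by omega
          rw [this]; exact hNζ
        rw [hNζ', mul_zero, sub_zero] at hev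
        -- hev : A_{d'+2}(ζ) * N_{d'}(ζ) = -∏ < 0
        have hAneg : (recPnum β (m' + 1) (d' + 2)).eval ζ < 0 := by
          nlinarith
        have : recPnum β (m' + 1) (d' + 2) = recPnum β (m' + 1) (d' + 1 + 1) := rfl
        rw [this] at hAneg
        exact absurd hAnn (not_le.mpr hAneg)
      exact hζ2 ξ₁ hζlt d le_rfl
  -- positivity of P_{m'} at ξ₁
  have hPm'pos : 0 < (recP β m').eval ξ₁ := by
    have := hξ₁3 m' (by omega)
    rwa [recPstar_eq_recP β lam₁ (m'+1) m' (by omega)] at this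
  -- the co-dilated polynomial for lam₂ is negative at ξ₁
  have hneg : (recPstar β lam₂ (m' + 1) (2 * n)).eval ξ₁ < 0 := by
    have hs1 := split β lam₁ m' d
    have hs2 := split β lam₂ m' d
    rw [← hd] at hs1 hs2
    have hdiff : recPstar β lam₂ (m' + 1) (2 * n) = recPstar β lam₁ (m' + 1) (2 * n)
        - C ((lam₂ - lam₁) * β (m' + 1)) * (recPnum β (m' + 2) d * recP β m') := by
      have hC : C ((lam₂ - lam₁) * β (m'+1))
          = C (lam₂ * β (m'+1)) - C (lam₁ * β (m'+1)) := by
        rw [← C_sub]; congr 1; ring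
      rw [hs1, hs2, hC]; ring
    rw [hdiff]
    have hβm : 0 < β (m' + 1) := hβ _ (by omega)
    have hpos : 0 < ((lam₂ - lam₁) * β (m' + 1)) *
        ((recPnum β (m' + 2) d).eval ξ₁ * (recP β m').eval ξ₁) :=
      mul_pos (mul_pos (sub_pos.mpr h12) hβm) (mul_pos hNpos hPm'pos)
    simp only [eval_sub, eval_mul, eval_C, hξ₁1, zero_sub, neg_lt_zero]
    exact hpos
  -- conclude ξ₁ < ξ₂
  obtain ⟨x₀, hx₀1, hx₀2⟩ := exists_root_gt (recPstar β lam₂ (m'+1) (2*n))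
    (recPstar_monic β lam₂ (m'+1) (2*n)).1
    (by
      rw [degree_eq_natDegree (recPstar_monic β lam₂ (m'+1) (2*n)).1.ne_zero,
        (recPstar_monic β lam₂ (m'+1) (2*n)).2]
      exact_mod_cast (by omega : 0 < 2 * n)) ξ₁ hneg
  by_contra hcon
  push_neg at hcon   -- ξ₂ ≤ ξ₁
  have : ξ₂ < x₀ := lt_of_le_of_lt hcon hx₀1
  exact absurd hx₀2 (ne_of_gt (hξ₂2 x₀ this (2 * n) le_rfl))

theorem codilated_asymmetric_smallest_zero (β : ℕ → ℝ) (hβ : ∀ k, 1 ≤ k → 0 < β k)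
    (m n : ℕ) (hm : 1 ≤ m) (hn : 1 ≤ n) :
    (∀ lam : ℝ, 0 < lam → (asymZeros β lam m n).Nonempty ∧ (asymZeros β lam m n).Finite) ∧
    (∀ lam₁ lam₂ : ℝ, 0 < lam₁ → lam₁ ≤ lam₂ →
      sInf (asymZeros β lam₂ m n) ≤ sInf (asymZeros β lam₁ m n)) ∧
    (m < 2 * n → ∀ lam₁ lam₂ : ℝ, 0 < lam₁ → lam₁ < lam₂ →
      sInf (asymZeros β lam₂ m n) < sInf (asymZeros β lam₁ m n)) := by
  refine ⟨?_, ?_, ?_⟩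
  · intro lam hlam
    obtain ⟨ξ, hξ0, hξ1, hξ2, hξ3⟩ := star_key β hβ lam hlam m n hm hn
    have h := asym_char β lam m n ξ hξ0 (recPstar_monic β lam m (2*n)).1.ne_zero hξ1
      (fun x hx => hξ2 x hx (2*n) le_rfl)
    exact ⟨h.1, h.2.1⟩
  · intro lam₁ lam₂ h1 h12
    rcases eq_or_lt_of_le h12 with rfl | hlt
    · exact le_rfl
    rcases Nat.lt_or_ge m (2 * n) with hmn | hmn
    · exact (sInf_strict_mono β hβ m n hm hn hmn lam₁ lam₂ h1 hlt).le
    · have hsets : asymZeros β lam₂ m n = asymZeros β lam₁ m n := by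
        unfold asymZeros
        rw [recPstar_eq_recP β lam₂ m (2*n) hmn, recPstar_eq_recP β lam₁ m (2*n) hmn]
      rw [hsets]
  · intro hmn lam₁ lam₂ h1 h12
    exact sInf_strict_mono β hβ m n hm hn hmn lam₁ lam₂ h1 h12

end
end

section
/- Assume β_k > 0 for all k ≥ 1, and that P_k(1) > 0 and P^{(m)}_k(1) > 0 for all k ≥ 0, where m ≥ 1. Then the sequence a_n := P_n(1)/(P^{(m)}_{n−m}(1)·P_m(1)), defined for n ≥ m, satisfies a_m = 1, is strictly decreasing and positive, and converges to a limit L_m with 0 ≤ L_m < 1. -/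
open Polynomial Filter

noncomputable section

/-- The sequence `a_n = P_n(1)/(P^{(m)}_{n−m}(1)·P_m(1))` (for `n ≥ m`). -/
def aSeq (β : ℕ → ℝ) (m : ℕ) (n : ℕ) : ℝ :=
  (recP β n).eval 1 / ((recPnum β m (n - m)).eval 1 * (recP β m).eval 1)

lemma recP_eval (β : ℕ → ℝ) (k : ℕ) :
    (recP β (k + 2)).eval 1 = (recP β (k + 1)).eval 1 - β (k + 1) * (recP β k).eval 1 := by
  simp [recP]

lemma recPnum_eval (β : ℕ → ℝ) (m k : ℕ) :
    (recPnum β m (k + 2)).eval 1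
      = (recPnum β m (k + 1)).eval 1 - β (k + 1 + m) * (recPnum β m k).eval 1 := by
  simp [recPnum]

theorem quotient_sequence_decreasing (β : ℕ → ℝ) (hβ : ∀ k, 1 ≤ k → 0 < β k)
    (m : ℕ) (hm : 1 ≤ m)
    (hP : ∀ k : ℕ, 0 < (recP β k).eval 1) (hQ : ∀ k : ℕ, 0 < (recPnum β m k).eval 1) :
    aSeq β m m = 1 ∧
    (∀ n : ℕ, m ≤ n → aSeq β m (n + 1) < aSeq β m n) ∧
    (∀ n : ℕ, m ≤ n → 0 < aSeq β m n) ∧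
    ∃ L : ℝ, Tendsto (aSeq β m) atTop (nhds L) ∧ 0 ≤ L ∧ L < 1 := by
  set p : ℕ → ℝ := fun k => (recP β k).eval 1 with hp
  set q : ℕ → ℝ := fun k => (recPnum β m k).eval 1 with hq
  have hq0 : q 0 = 1 := by simp [hq, recPnum]
  have hq1 : q 1 = 1 := by simp [hq, recPnum]
  -- key determinant inequality
  have hD : ∀ k : ℕ, p (m + k + 1) * q k < p (m + k) * q (k + 1) := by
    intro k
    induction k with
    | zero =>
      obtain ⟨j, rfl⟩ : ∃ j, m = j + 1 := ⟨m - 1, by omega⟩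
      have h1 : p (j + 2) = p (j + 1) - β (j + 1) * p j := recP_eval β j
      have h2 : 0 < β (j + 1) * p j := mul_pos (hβ _ (by omega)) (hP j)
      simp only [hq0, hq1, mul_one, Nat.add_zero]
      have hid : p (j + 1 + 1) = p (j + 2) := by norm_num
      rw [hid]
      linarith
    | succ k ih =>
      have h1 : p (m + k + 2) = p (m + k + 1) - β (m + k + 1) * p (m + k) := by
        simpa using recP_eval β (m + k)
      have h2 : q (k + 2) = q (k + 1) - β (k + 1 + m) * q k := recPnum_eval β m k
      have hβpos : 0 < β (m + k + 1) := hβ _ (by omega)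
      have key : p (m + k + 2) * q (k + 1) - p (m + k + 1) * q (k + 2)
          = β (m + k + 1) * (p (m + k + 1) * q k - p (m + k) * q (k + 1)) := by
        rw [h1, h2, show k + 1 + m = m + k + 1 by omega]; ring
      have : p (m + k + 2) * q (k + 1) - p (m + k + 1) * q (k + 2) < 0 := by
        rw [key]
        exact mul_neg_of_pos_of_neg hβpos (by linarith)
      have : p (m + k + 2) * q (k + 1) < p (m + k + 1) * q (k + 2) := by linarith
      simpa [show m + (k + 1) + 1 = m + k + 2 by omega,
        show m + (k + 1) = m + k + 1 by omega] using this
  have hpm : 0 < p m := hP m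
  have haval : ∀ k : ℕ, aSeq β m (m + k) = p (m + k) / (q k * p m) := by
    intro k
    simp [aSeq, hp, hq, show m + k - m = k by omega]
  have ha_pos : ∀ k : ℕ, 0 < aSeq β m (m + k) := by
    intro k
    rw [haval k]
    exact div_pos (hP _) (mul_pos (hQ _) hpm)
  have ha_dec : ∀ k : ℕ, aSeq β m (m + k + 1) < aSeq β m (m + k) := by
    intro k
    have := hD k
    have h := haval k
    have h' : aSeq β m (m + k + 1) = p (m + k + 1) / (q (k + 1) * p m) := by
      simpa [show m + (k + 1) = m + k + 1 by omega] using haval (k + 1)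
    rw [h, h']
    rw [div_lt_div_iff₀ (mul_pos (hQ _) hpm) (mul_pos (hQ _) hpm)]
    have : p (m + k + 1) * q k * p m < p (m + k) * q (k + 1) * p m :=
      mul_lt_mul_of_pos_right this hpm
    nlinarith [hpm]
  have ham : aSeq β m m = 1 := by
    have := haval 0
    simp only [Nat.add_zero] at this
    rw [this, hq0, one_mul, div_self (ne_of_gt hpm)]
  refine ⟨ham, ?_, ?_, ?_⟩
  · intro n hn
    obtain ⟨k, rfl⟩ := Nat.exists_eq_add_of_le hn
    exact ha_dec k
  · intro n hn
    obtain ⟨k, rfl⟩ := Nat.exists_eq_add_of_le hn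
    exact ha_pos k
  · -- convergence
    set f : ℕ → ℝ := fun k => aSeq β m (k + m) with hf
    have hanti : StrictAnti f := by
      apply strictAnti_nat_of_succ_lt
      intro k
      simpa [hf, show k + 1 + m = m + k + 1 by omega, show k + m = m + k by omega]
        using ha_dec k
    have hbdd : BddBelow (Set.range f) := by
      refine ⟨0, ?_⟩
      rintro x ⟨k, rfl⟩
      exact le_of_lt (by simpa [hf, show k + m = m + k by omega] using ha_pos k)
    have htend : Tendsto f atTop (nhds (⨅ k, f k)) :=
      tendsto_atTop_ciInf hanti.antitone hbdd
    refine ⟨⨅ k, f k, ?_, ?_, ?_⟩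
    · exact (tendsto_add_atTop_iff_nat m).mp htend
    · exact le_ciInf fun k =>
        le_of_lt (by simpa [hf, show k + m = m + k by omega] using ha_pos k)
    · calc (⨅ k, f k) ≤ f 1 := ciInf_le hbdd 1
        _ < f 0 := hanti (by norm_num)
        _ = 1 := by simpa [hf] using ham
end
end

section
/- Let (β_k)_{k≥1} be any sequence of real numbers, m ≥ 1 and λ ∈ ℝ. Then, as identities in ℝ[X]: P*_n(·, λ, m) = P_n for every 0 ≤ n ≤ m, and P*_n(·, λ, m) = λ·P_n + (1−λ)·P_m·P^{(m)}_{n−m} for every n > m. -/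
open Polynomial Filter

noncomputable section

lemma part1 (β : ℕ → ℝ) (m : ℕ) (lam : ℝ) :
    ∀ n : ℕ, n ≤ m → recPstar β lam m n = recP β n := by
  intro n
  induction n using Nat.twoStepInduction with
  | zero => intro _; rfl
  | one => intro _; rfl
  | more k ih2 ih1 =>
    intro h
    have hk1 : k + 1 ≠ m := by omega
    rw [recPstar, recP, if_neg hk1, ih1 (by omega), ih2 (by omega)]

lemma aux (β : ℕ → ℝ) (m : ℕ) (hm : 1 ≤ m) (lam : ℝ) :
    ∀ k : ℕ, recPstar β lam m (m + k) =
      C lam * recP β (m + k) + C (1 - lam) * recP β m * recPnum β m k := by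
  intro k
  induction k using Nat.twoStepInduction with
  | zero =>
    simp only [Nat.add_zero, recPnum, part1 β m lam m le_rfl, map_sub, map_one, mul_one]
    ring
  | one =>
    obtain ⟨j, rfl⟩ : ∃ j, m = j + 1 := ⟨m - 1, by omega⟩
    have h1 : j + 1 + 1 = j + 2 := rfl
    rw [h1, show j + 2 = (j) + 2 from rfl]
    rw [recPstar, if_pos rfl, recP]
    rw [part1 β (j+1) lam (j+1) le_rfl, part1 β (j+1) lam j (by omega)]
    simp only [recPnum, map_sub, map_one, map_mul]
    ring
  | more k ih2 ih1 =>
    have e1 : m + (k + 2) = (m + k) + 2 := by ring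
    have e2 : m + (k + 1) = (m + k) + 1 := by ring
    rw [e1, recPstar, recP, if_neg (by omega), ← e2] at *
    rw [ih1, ih2, recPnum]
    rw [show m + (k + 1) = k + 1 + m from by ring]
    ring

theorem codilated_representation (β : ℕ → ℝ) (m : ℕ) (hm : 1 ≤ m) (lam : ℝ) :
    (∀ n : ℕ, n ≤ m → recPstar β lam m n = recP β n) ∧
    (∀ n : ℕ, m < n →
      recPstar β lam m n =
        C lam * recP β n + C (1 - lam) * recP β m * recPnum β m (n - m)) := by
  refine ⟨part1 β m lam, fun n hn => ?_⟩
  have := aux β m hm lam (n - m)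
  rwa [Nat.add_sub_cancel' hn.le] at this

end
end

section
/- For every real ν > 1/2 and every integer n ≥ 1, one has Γ(n+2ν)·(n+ν)/Γ(n+1) ≥ n^{2ν}/e^{2ν−1}, where Γ is the real Gamma function and e is Euler's number. -/
theorem gamma_gosper_lower_bound (ν : ℝ) (hν : 1 / 2 < ν) (n : ℕ) (hn : 1 ≤ n) :
    Real.Gamma (n + 2 * ν) * (n + ν) / Real.Gamma (n + 1) ≥
      (n : ℝ) ^ (2 * ν) / Real.exp 1 ^ (2 * ν - 1) := by
  have hn0 : (0:ℝ) < n := by exact_mod_cast hn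
  have hn1 : (1:ℝ) ≤ n := by exact_mod_cast hn
  set s : ℝ := 2 * ν - 1 with hs
  have hs0 : 0 < s := by simp only [hs]; linarith
  have hΓn : 0 < Real.Gamma n := Real.Gamma_pos_of_pos hn0
  have hΓn1 : 0 < Real.Gamma ((n:ℝ)+1) := Real.Gamma_pos_of_pos (by linarith)
  have hΓz : 0 < Real.Gamma ((n:ℝ)+1+s) := Real.Gamma_pos_of_pos (by linarith)
  have hslope := Real.convexOn_log_Gamma.slope_mono_adjacent
    (x := (n:ℝ)) (y := (n:ℝ)+1) (z := (n:ℝ)+1+s)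
    (Set.mem_Ioi.mpr hn0) (Set.mem_Ioi.mpr (by linarith)) (by linarith) (by linarith)
  simp only [Function.comp] at hslope
  have hΓrec : Real.Gamma ((n:ℝ)+1) = n * Real.Gamma n := Real.Gamma_add_one (ne_of_gt hn0)
  have hlog1 : Real.log (Real.Gamma ((n:ℝ)+1)) - Real.log (Real.Gamma n) = Real.log n := by
    rw [hΓrec, Real.log_mul (ne_of_gt hn0) (ne_of_gt hΓn)]; ring
  have hslope2 : s * Real.log n ≤
      Real.log (Real.Gamma ((n:ℝ)+1+s)) - Real.log (Real.Gamma ((n:ℝ)+1)) := by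
    have h1 : ((n:ℝ)+1) - n = 1 := by ring
    have h2 : ((n:ℝ)+1+s) - ((n:ℝ)+1) = s := by ring
    rw [h1, h2, div_one, hlog1] at hslope
    calc s * Real.log n
        ≤ s * ((Real.log (Real.Gamma ((n:ℝ)+1+s)) - Real.log (Real.Gamma ((n:ℝ)+1))) / s) :=
          by exact mul_le_mul_of_nonneg_left hslope (le_of_lt hs0)
      _ = _ := by field_simp
  have key : Real.Gamma ((n:ℝ)+1) * (n:ℝ)^s ≤ Real.Gamma ((n:ℝ)+1+s) := by
    have := Real.exp_le_exp.mpr (by linarith :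
      Real.log (Real.Gamma ((n:ℝ)+1)) + s * Real.log n ≤ Real.log (Real.Gamma ((n:ℝ)+1+s)))
    rwa [Real.exp_add, Real.exp_log hΓn1, Real.exp_log hΓz, ← Real.log_rpow hn0,
      Real.exp_log (Real.rpow_pos_of_pos hn0 s)] at this
  have heq : (n:ℝ) + 2 * ν = (n:ℝ) + 1 + s := by simp only [hs]; ring
  rw [heq, ge_iff_le, div_le_div_iff₀ (Real.rpow_pos_of_pos (Real.exp_pos 1) _) hΓn1]
  have hes : (1:ℝ) ≤ Real.exp 1 ^ (2 * ν - 1) := by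
    rw [Real.exp_one_rpow]
    exact Real.one_le_exp (by linarith)
  have hnν : (0:ℝ) < n + ν := by linarith
  have h2ν : (n:ℝ) ^ (2 * ν) = (n:ℝ)^s * n := by
    rw [show 2 * ν = s + 1 by simp only [hs]; ring, Real.rpow_add hn0, Real.rpow_one]
  calc (n:ℝ) ^ (2 * ν) * Real.Gamma ((n:ℝ)+1)
      ≤ (n:ℝ) ^ (2 * ν) * Real.Gamma ((n:ℝ)+1) * Real.exp 1 ^ (2 * ν - 1) := by
        nlinarith [mul_pos (Real.rpow_pos_of_pos hn0 (2*ν)) hΓn1]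
    _ = ((n:ℝ)^s * n) * Real.Gamma ((n:ℝ)+1) * Real.exp 1 ^ (2 * ν - 1) := by rw [h2ν]
    _ ≤ ((n:ℝ)^s * (n + ν)) * Real.Gamma ((n:ℝ)+1) * Real.exp 1 ^ (2 * ν - 1) := by
        have h : (n:ℝ)^s * n ≤ (n:ℝ)^s * (n + ν) :=
          mul_le_mul_of_nonneg_left (by linarith) (le_of_lt (Real.rpow_pos_of_pos hn0 s))
        exact mul_le_mul_of_nonneg_right
          (mul_le_mul_of_nonneg_right h (le_of_lt hΓn1))
          (le_of_lt (lt_of_lt_of_le one_pos hes))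
    _ = (Real.Gamma ((n:ℝ)+1) * (n:ℝ)^s) * (n + ν) * Real.exp 1 ^ (2 * ν - 1) := by ring
    _ ≤ Real.Gamma ((n:ℝ)+1+s) * ((n:ℝ) + ν) * Real.exp 1 ^ (2 * ν - 1) := by
        have := mul_le_mul_of_nonneg_right key (le_of_lt hnν)
        nlinarith [lt_of_lt_of_le one_pos hes]
end

section
/- Let n ≥ 1 be an integer and λ ∈ ℝ with (2−λ)·2n + λ ≠ 0. Then for all x ∈ ℝ: U*_{2n}(x, λ)/U*_{2n}(1, λ) = ((2n+1)/((2−λ)·2n + λ)) · Ũ_{2n}(x)/Ũ_{2n}(1) + ((1−λ)(2n−1)/((2−λ)·2n + λ)) · Ũ_{2n−2}(x)/Ũ_{2n−2}(1); in particular the normalized co-dilated Chebyshev polynomial of degree 2n is an affine combination of the normalized Chebyshev polynomials of the second kind of degrees 2n and 2n−2, the coefficients summing to 1. -/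
/-!
Since `2 T_{m+2} = U_{m+2} - U_m`, the monic polynomials satisfy `T̃_{m+2} = Ũ_{m+2} - Ũ_m / 4`,
so `U*_{m+2}(·, λ) = Ũ_{m+2} + ((1 - λ) / 4) Ũ_m` is already a linear combination of two
second-kind polynomials. Normalizing with `Ũ_k(1) = (k + 1) / 2^k` gives the stated weights,
whose sum is `U*_{m+2}(1, λ) / U*_{m+2}(1, λ) = 1`.
-/

open Polynomial

noncomputable section

theorem monicU_eval_one (m : ℕ) : (monicU m).eval 1 = (m + 1) / 2 ^ m := by
  simp only [monicU, eval_mul, eval_C, Chebyshev.U_eval_one, Int.cast_natCast]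
  ring

theorem monicT_add_two (m : ℕ) : monicT (m + 2) = monicU (m + 2) - C (1 / 4) * monicU m := by
  have hT : (2 : ℝ[X]) * Chebyshev.T ℝ (m + 2 : ℕ) = Chebyshev.U ℝ (m + 2 : ℕ) - Chebyshev.U ℝ m := by
    push_cast
    exact Chebyshev.two_mul_T_eq_U_sub_U ℝ m
  have hpow : C ((2 : ℝ) ^ (m + 2 - 1 : ℕ))⁻¹ = C ((2 : ℝ) ^ (m + 2))⁻¹ * 2 := by
    rw [show m + 2 - 1 = m + 1 by omega, ← C_ofNat, ← C_mul, pow_succ 2 (m + 1)]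
    congr 1
    field_simp
  rw [monicT, if_neg (by omega), hpow, mul_assoc, hT, monicU, monicU, mul_sub, sub_right_inj,
    ← mul_assoc, ← C_mul, pow_add]
  norm_num

theorem Ustar_add_two (m : ℕ) (lam : ℝ) :
    Ustar (m + 2) lam = monicU (m + 2) + C ((1 - lam) / 4) * monicU m := by
  have hC : C ((1 - lam) / 4) = C (1 / 4) - C lam * C (1 / 4) := by
    rw [← C_mul, ← C_sub]
    ring_nf
  rw [Ustar, monicT_add_two, hC]
  simp only [C_sub, C_1, C_ofNat]
  ring

theorem Ustar_eval_one_add_two (m : ℕ) (lam : ℝ) :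
    (Ustar (m + 2) lam).eval 1 = ((2 - lam) * (m + 2) + lam) / 2 ^ (m + 2) := by
  rw [Ustar_add_two, eval_add, eval_mul, eval_C, monicU_eval_one, monicU_eval_one]
  push_cast
  field_simp
  ring

theorem Ustar_eval_div_eval_one (m : ℕ) (hm : 2 ≤ m) (lam x : ℝ) :
    (Ustar m lam).eval x / (Ustar m lam).eval 1 =
      (m + 1) / ((2 - lam) * m + lam) * ((monicU m).eval x / (monicU m).eval 1) +
      (1 - lam) * (m - 1) / ((2 - lam) * m + lam) *
        ((monicU (m - 2)).eval x / (monicU (m - 2)).eval 1) := by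
  obtain ⟨k, rfl⟩ := Nat.exists_eq_add_of_le' hm
  rw [Nat.add_sub_cancel, Ustar_eval_one_add_two, Ustar_add_two, monicU_eval_one,
    monicU_eval_one, eval_add, eval_mul, eval_C]
  push_cast
  field_simp
  ring

theorem codilated_chebyshev_affine_combination (n : ℕ) (hn : 1 ≤ n) (lam : ℝ)
    (h : (2 - lam) * (2 * n) + lam ≠ 0) :
    (∀ x : ℝ,
      (Ustar (2 * n) lam).eval x / (Ustar (2 * n) lam).eval 1 =
        (2 * n + 1) / ((2 - lam) * (2 * n) + lam) *
          ((monicU (2 * n)).eval x / (monicU (2 * n)).eval 1) +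
        (1 - lam) * (2 * n - 1) / ((2 - lam) * (2 * n) + lam) *
          ((monicU (2 * n - 2)).eval x / (monicU (2 * n - 2)).eval 1)) ∧
    (2 * n + 1) / ((2 - lam) * (2 * n) + lam) +
        (1 - lam) * (2 * n - 1) / ((2 - lam) * (2 * n) + lam) = 1 := by
  refine ⟨fun x ↦ ?_, ?_⟩
  · exact_mod_cast Ustar_eval_div_eval_one (2 * n) (by omega) lam x
  · rw [← add_div, div_eq_one_iff_eq h]
    ring

end
end
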